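/- arXiv:1609.03340 — 6 statements merged into one kernel-verified Lean document; each statement's English description precedes it below -/
import Mathlib

section
/- For finite positive measures μ, ν on ℝ with finite first moments, equal mass, and equal barycenter, the relation μ ≤_c ν (convex order) holds if and only if the potential functions satisfy u_μ(t) ≤ u_ν(t) for all t ∈ ℝ, where u_θ(t) = ∫|x − t| dθ(x). -/
/-!
Write `ℓ_s` for the supporting line of a convex `φ` at `s` (slope the right derivative). Since
`(x - c)⁺ = ((x - c) + |x - c|) / 2`, equal mass, equal barycenter and `u_μ ≤ u_ν` give
`∫ f dμ ≤ ∫ f dν` for every affine `f` plus a nonnegative combination of ramps `(a + b x)⁺`, `b ≥ 0`.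
The maximum of `ℓ_{t₀}, …, ℓ_{tⱼ}` for increasing `t₀ ≤ ⋯ ≤ tⱼ` is such a function: left of `tⱼ`
the line `ℓ_{tⱼ₊₁}` lies below `ℓ_{tⱼ}`, and right of `tⱼ` the maximum is `ℓ_{tⱼ}`, so adding
`ℓ_{tⱼ₊₁}` adds exactly the ramp `(ℓ_{tⱼ₊₁} - ℓ_{tⱼ})⁺`. Taking the `tᵢ` on the grid of step `1/n`
in `[-n, n]`, these maxima lie between `ℓ_0` and `φ` and converge to `φ` pointwise, so dominated
convergence concludes.
-/

open MeasureTheory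

def ConvexOrder (μ ν : Measure ℝ) : Prop :=
  ∀ φ : ℝ → ℝ, ConvexOn ℝ Set.univ φ → Integrable φ μ → Integrable φ ν →
    ∫ x, φ x ∂μ ≤ ∫ x, φ x ∂ν

/-- The potential function `u_θ(t) = ∫ |x − t| dθ(x)`. -/
noncomputable def potentialFn (θ : Measure ℝ) (t : ℝ) : ℝ := ∫ x, |x - t| ∂θ

open Set Filter Topology

noncomputable def supportLine (φ : ℝ → ℝ) (s x : ℝ) : ℝ :=
  φ s + derivWithin φ (Ioi s) s * (x - s)

noncomputable def supportMax (φ : ℝ → ℝ) (t : ℕ → ℝ) : ℕ → ℝ → ℝ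
  | 0, x => supportLine φ (t 0) x
  | j + 1, x => max (supportMax φ t j x) (supportLine φ (t (j + 1)) x)

noncomputable def supportApprox (φ : ℝ → ℝ) (n : ℕ) : ℝ → ℝ :=
  supportMax φ (fun k => k / n - n) (2 * n ^ 2)

lemma supportLine_eq_affine (φ : ℝ → ℝ) (s x : ℝ) :
    supportLine φ s x = (φ s - derivWithin φ (Ioi s) s * s) + derivWithin φ (Ioi s) s * x := by
  unfold supportLine; ring

lemma continuous_supportLine (φ : ℝ → ℝ) (s : ℝ) : Continuous (supportLine φ s) := by
  unfold supportLine; fun_prop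

lemma continuous_supportMax (φ : ℝ → ℝ) (t : ℕ → ℝ) (j : ℕ) : Continuous (supportMax φ t j) := by
  induction j with
  | zero => exact continuous_supportLine φ (t 0)
  | succ j ih => exact ih.max (continuous_supportLine φ (t (j + 1)))

lemma supportLine_le_supportMax (φ : ℝ → ℝ) (t : ℕ → ℝ) {i j : ℕ} (hij : i ≤ j) (x : ℝ) :
    supportLine φ (t i) x ≤ supportMax φ t j x := by
  induction j, hij using Nat.le_induction with
  | base => cases i <;> simp [supportMax]
  | succ j _ ih => exact ih.trans (le_max_left _ _)

namespace ConvexOn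

variable {φ : ℝ → ℝ}

lemma monotone_rightDeriv (hφ : ConvexOn ℝ univ φ) : Monotone fun x => derivWithin φ (Ioi x) x :=
  fun _ _ h => hφ.monotoneOn_rightDeriv (by simp) (by simp) h

lemma supportLine_le (hφ : ConvexOn ℝ univ φ) (s x : ℝ) : supportLine φ s x ≤ φ x := by
  rcases lt_trichotomy s x with h | rfl | h
  · have hslope := hφ.rightDeriv_le_slope_of_mem_interior (by simp) (mem_univ x) h
    rw [slope_def_field, le_div_iff₀ (sub_pos.2 h)] at hslope
    unfold supportLine; linarith
  · simp [supportLine]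
  · have hslope := hφ.slope_le_leftDeriv_of_mem_interior (mem_univ x) (by simp) h
    have hleft := hφ.leftDeriv_le_rightDeriv_of_mem_interior (x := s) (by simp)
    rw [slope_def_field, div_le_iff₀ (sub_pos.2 h)] at hslope
    unfold supportLine; nlinarith

lemma supportLine_le_supportLine_left (hφ : ConvexOn ℝ univ φ) {s t x : ℝ} (hst : s ≤ t)
    (hxs : x ≤ s) : supportLine φ t x ≤ supportLine φ s x := by
  have hts := hφ.supportLine_le t s
  have hmono := hφ.monotone_rightDeriv hst
  unfold supportLine at *
  nlinarith [mul_nonneg (sub_nonneg.2 hmono) (sub_nonneg.2 hxs)]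

lemma supportLine_le_supportLine_right (hφ : ConvexOn ℝ univ φ) {s t x : ℝ} (hst : s ≤ t)
    (htx : t ≤ x) : supportLine φ s x ≤ supportLine φ t x := by
  have hst' := hφ.supportLine_le s t
  have hmono := hφ.monotone_rightDeriv hst
  unfold supportLine at *
  nlinarith [mul_nonneg (sub_nonneg.2 hmono) (sub_nonneg.2 htx)]

lemma tendsto_supportLine (hφ : ConvexOn ℝ univ φ) (x : ℝ) :
    Tendsto (fun s => supportLine φ s x) (𝓝 x) (𝓝 (φ x)) := by
  set g := fun s => derivWithin φ (Ioi s) s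
  have hbdd : IsBoundedUnder (· ≤ ·) (𝓝 x) (norm ∘ g) := by
    refine isBoundedUnder_of_eventually_le (a := max |g (x - 1)| |g (x + 1)|) ?_
    filter_upwards [Ioo_mem_nhds (sub_one_lt x) (lt_add_one x)] with s hs
    exact abs_le_max_abs_abs (hφ.monotone_rightDeriv hs.1.le) (hφ.monotone_rightDeriv hs.2.le)
  have hdev : Tendsto (fun s => g s * (x - s)) (𝓝 x) (𝓝 0) :=
    isBoundedUnder_le_mul_tendsto_zero hbdd (by simpa using (tendsto_id (x := 𝓝 x)).const_sub x)
  have hsum := hφ.locallyLipschitz.continuous.continuousAt.tendsto.add hdev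
  rwa [add_zero] at hsum

lemma supportMax_le (hφ : ConvexOn ℝ univ φ) (t : ℕ → ℝ) (j : ℕ) (x : ℝ) :
    supportMax φ t j x ≤ φ x := by
  induction j with
  | zero => exact hφ.supportLine_le _ x
  | succ j ih => exact max_le ih (hφ.supportLine_le _ x)

variable {t : ℕ → ℝ}

lemma supportMax_eq_of_le (hφ : ConvexOn ℝ univ φ) (ht : Monotone t) {j : ℕ} {x : ℝ}
    (hx : t j ≤ x) : supportMax φ t j x = supportLine φ (t j) x := by
  induction j with
  | zero => rfl
  | succ j ih =>
    rw [supportMax, ih ((ht j.le_succ).trans hx),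
      max_eq_right (hφ.supportLine_le_supportLine_right (ht j.le_succ) hx)]

lemma supportMax_succ (hφ : ConvexOn ℝ univ φ) (ht : Monotone t) (j : ℕ) (x : ℝ) :
    supportMax φ t (j + 1) x =
      supportMax φ t j x + max (supportLine φ (t (j + 1)) x - supportLine φ (t j) x) 0 := by
  rw [supportMax]
  rcases le_total (t j) x with hx | hx
  · rw [supportMax_eq_of_le hφ ht hx, ← max_add_add_left, add_sub_cancel, add_zero, max_comm]
  · have hle := hφ.supportLine_le_supportLine_left (ht j.le_succ) hx
    rw [max_eq_right (sub_nonpos.2 hle), add_zero, max_eq_left]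
    exact hle.trans (supportLine_le_supportMax φ t le_rfl x)

end ConvexOn

lemma monotone_grid (n : ℕ) : Monotone fun k : ℕ => (k : ℝ) / n - n := fun i j h => by
  dsimp only
  gcongr

lemma supportLine_zero_le_supportApprox (φ : ℝ → ℝ) (n : ℕ) (x : ℝ) :
    supportLine φ 0 x ≤ supportApprox φ n x := by
  have hzero : ((n ^ 2 : ℕ) : ℝ) / n - n = 0 := by
    rcases n.eq_zero_or_pos with rfl | hn
    · simp
    · push_cast; field_simp; ring
  have h := supportLine_le_supportMax φ (fun k : ℕ => (k : ℝ) / n - n)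
    (show n ^ 2 ≤ 2 * n ^ 2 by omega) x
  rwa [hzero] at h

lemma ConvexOn.tendsto_supportApprox {φ : ℝ → ℝ} (hφ : ConvexOn ℝ univ φ) (x : ℝ) :
    Tendsto (fun n => supportApprox φ n x) atTop (𝓝 (φ x)) := by
  set k : ℕ → ℕ := fun n => ⌊n * (x + n)⌋₊
  set s : ℕ → ℝ := fun n => (k n : ℝ) / n - n
  obtain ⟨N, hN⟩ := exists_nat_ge (|x| + 1)
  have hgrid : ∀ n ≥ N, x - 1 / n < s n ∧ s n ≤ x ∧ k n ≤ 2 * n ^ 2 := by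
    intro n hn
    have hn' : |x| + 1 ≤ n := hN.trans (by exact_mod_cast hn)
    have hn0 : (0 : ℝ) < n := by linarith [abs_nonneg x]
    obtain ⟨hx_lo, hx_hi⟩ := abs_le.1 (le_refl |x|)
    have hnonneg : 0 ≤ n * (x + n) := by nlinarith
    have hfloor_le := Nat.floor_le hnonneg
    have hlt_floor := Nat.lt_floor_add_one (n * (x + n))
    have hscaled : (n : ℝ) * s n = k n - n ^ 2 := by simp only [s]; field_simp
    have hinv : (n : ℝ) * (x - 1 / n) = n * x - 1 := by field_simp
    refine ⟨lt_of_mul_lt_mul_left (a := (n : ℝ)) ?_ hn0.le, le_of_mul_le_mul_left ?_ hn0, ?_⟩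
    · rw [hscaled, hinv]; linarith
    · rw [hscaled]; linarith
    · have : (k n : ℝ) ≤ 2 * n ^ 2 := by nlinarith
      exact_mod_cast this
  have hs : Tendsto s atTop (𝓝 x) := by
    have hlow : Tendsto (fun n : ℕ => x - 1 / (n : ℝ)) atTop (𝓝 x) := by
      simpa using tendsto_one_div_atTop_nhds_zero_nat.const_sub x
    refine tendsto_of_tendsto_of_tendsto_of_le_of_le' hlow tendsto_const_nhds ?_ ?_ <;>
      filter_upwards [eventually_ge_atTop N] with n hn
    exacts [(hgrid n hn).1.le, (hgrid n hn).2.1]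
  refine tendsto_of_tendsto_of_tendsto_of_le_of_le' ((hφ.tendsto_supportLine x).comp hs)
    tendsto_const_nhds ?_ (Eventually.of_forall fun n => hφ.supportMax_le _ _ x)
  filter_upwards [eventually_ge_atTop N] with n hn
  exact supportLine_le_supportMax φ (fun k : ℕ => (k : ℝ) / n - n) (hgrid n hn).2.2 x

section Integrals

variable {θ : Measure ℝ} [IsFiniteMeasure θ]

lemma integrable_supportLine (hθ : Integrable (fun x : ℝ => x) θ) (φ : ℝ → ℝ) (s : ℝ) :
    Integrable (supportLine φ s) θ :=
  (integrable_const _).add ((hθ.sub (integrable_const s)).const_mul _)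

lemma ConvexOn.integrable_supportMax {φ : ℝ → ℝ} {t : ℕ → ℝ} (hφ : ConvexOn ℝ univ φ)
    (ht : Monotone t) (hθ : Integrable (fun x : ℝ => x) θ) (j : ℕ) :
    Integrable (supportMax φ t j) θ := by
  induction j with
  | zero => exact integrable_supportLine hθ φ (t 0)
  | succ j ih =>
    rw [funext (hφ.supportMax_succ ht j)]
    exact ih.add ((integrable_supportLine hθ φ _).sub (integrable_supportLine hθ φ _)).pos_part

lemma integral_affine (hθ : Integrable (fun x : ℝ => x) θ) (a b : ℝ) :
    ∫ x, a + b * x ∂θ = a * θ.real univ + b * ∫ x, x ∂θ := by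
  rw [integral_add (integrable_const a) (hθ.const_mul b), integral_const, integral_const_mul,
    smul_eq_mul, mul_comm]

lemma ConvexOn.tendsto_integral_supportApprox {φ : ℝ → ℝ} (hφ : ConvexOn ℝ univ φ)
    (hθ : Integrable (fun x : ℝ => x) θ) (hφθ : Integrable φ θ) :
    Tendsto (fun n => ∫ x, supportApprox φ n x ∂θ) atTop (𝓝 (∫ x, φ x ∂θ)) := by
  refine tendsto_integral_of_dominated_convergence (fun x => |φ x| + |supportLine φ 0 x|)
    (fun n => (continuous_supportMax φ _ _).aestronglyMeasurable)
    (hφθ.abs.add (integrable_supportLine hθ φ 0).abs)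
    (fun n => ae_of_all _ fun x => ?_) (ae_of_all _ hφ.tendsto_supportApprox)
  have hlower := supportLine_zero_le_supportApprox φ n x
  have hupper : supportApprox φ n x ≤ φ x := hφ.supportMax_le _ _ x
  rw [Real.norm_eq_abs, abs_le]
  constructor <;>
    linarith [neg_abs_le (supportLine φ 0 x), abs_nonneg (φ x), le_abs_self (φ x),
      abs_nonneg (supportLine φ 0 x)]

end Integrals

lemma max_zero_eq_half_add_abs (a : ℝ) : max a 0 = (a + |a|) / 2 := by
  rcases le_total a 0 with h | h
  · rw [max_eq_right h, abs_of_nonpos h]; ring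
  · rw [max_eq_left h, abs_of_nonneg h]; ring

section Comparison

variable {μ ν : Measure ℝ} [IsFiniteMeasure μ] [IsFiniteMeasure ν]

lemma integral_affine_eq (hμ : Integrable (fun x : ℝ => x) μ) (hν : Integrable (fun x : ℝ => x) ν)
    (hmass : μ univ = ν univ) (hbar : ∫ x, x ∂μ = ∫ x, x ∂ν) (a b : ℝ) :
    ∫ x, a + b * x ∂μ = ∫ x, a + b * x ∂ν := by
  rw [integral_affine hμ, integral_affine hν, measureReal_def, measureReal_def, hmass, hbar]

lemma integral_max_sub_zero_le (hμ : Integrable (fun x : ℝ => x) μ)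
    (hν : Integrable (fun x : ℝ => x) ν) (hmass : μ univ = ν univ) (hbar : ∫ x, x ∂μ = ∫ x, x ∂ν)
    (hpot : ∀ t, potentialFn μ t ≤ potentialFn ν t) (c : ℝ) :
    ∫ x, max (x - c) 0 ∂μ ≤ ∫ x, max (x - c) 0 ∂ν := by
  have hlin : ∫ x, (x - c) ∂μ = ∫ x, (x - c) ∂ν := by
    simpa [neg_add_eq_sub] using integral_affine_eq hμ hν hmass hbar (-c) 1
  have hlin_int : ∀ {θ : Measure ℝ} [IsFiniteMeasure θ], Integrable (fun x : ℝ => x) θ →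
      Integrable (fun x : ℝ => x - c) θ := fun hθ => hθ.sub (integrable_const c)
  simp_rw [max_zero_eq_half_add_abs]
  rw [integral_div, integral_div, integral_add (hlin_int hμ) (hlin_int hμ).abs,
    integral_add (hlin_int hν) (hlin_int hν).abs, hlin]
  have hc : ∫ x, |x - c| ∂μ ≤ ∫ x, |x - c| ∂ν := hpot c
  linarith

lemma integral_max_affine_zero_le (hμ : Integrable (fun x : ℝ => x) μ)
    (hν : Integrable (fun x : ℝ => x) ν) (hmass : μ univ = ν univ) (hbar : ∫ x, x ∂μ = ∫ x, x ∂ν)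
    (hpot : ∀ t, potentialFn μ t ≤ potentialFn ν t) (a b : ℝ) (hb : 0 ≤ b) :
    ∫ x, max (a + b * x) 0 ∂μ ≤ ∫ x, max (a + b * x) 0 ∂ν := by
  rcases hb.eq_or_lt with rfl | hb
  · simp [measureReal_def, hmass]
  · have hscale : ∀ x, max (a + b * x) 0 = b * max (x - -a / b) 0 := fun x => by
      rw [mul_max_of_nonneg _ _ hb.le, mul_zero, mul_sub, mul_div_cancel₀ _ hb.ne']
      ring_nf
    simp_rw [hscale, integral_const_mul]
    exact mul_le_mul_of_nonneg_left
      (integral_max_sub_zero_le hμ hν hmass hbar hpot _) hb.le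

lemma ConvexOn.integral_supportMax_le {φ : ℝ → ℝ} {t : ℕ → ℝ} (hφ : ConvexOn ℝ univ φ)
    (ht : Monotone t) (hμ : Integrable (fun x : ℝ => x) μ) (hν : Integrable (fun x : ℝ => x) ν)
    (haff : ∀ a b : ℝ, ∫ x, a + b * x ∂μ = ∫ x, a + b * x ∂ν)
    (hramp : ∀ a b : ℝ, 0 ≤ b → ∫ x, max (a + b * x) 0 ∂μ ≤ ∫ x, max (a + b * x) 0 ∂ν)
    (j : ℕ) : ∫ x, supportMax φ t j x ∂μ ≤ ∫ x, supportMax φ t j x ∂ν := by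
  induction j with
  | zero =>
    simp only [supportMax, supportLine_eq_affine]
    exact (haff _ _).le
  | succ j ih =>
    have hramp_int : ∀ {θ : Measure ℝ} [IsFiniteMeasure θ], Integrable (fun x : ℝ => x) θ →
        Integrable (fun x => max (supportLine φ (t (j + 1)) x - supportLine φ (t j) x) 0) θ :=
      fun hθ => ((integrable_supportLine hθ φ _).sub (integrable_supportLine hθ φ _)).pos_part
    simp_rw [hφ.supportMax_succ ht j]
    rw [integral_add (hφ.integrable_supportMax ht hμ j) (hramp_int hμ),
      integral_add (hφ.integrable_supportMax ht hν j) (hramp_int hν)]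
    refine add_le_add ih ?_
    simp only [supportLine_eq_affine, add_sub_add_comm, ← sub_mul]
    exact hramp _ _ (sub_nonneg.2 (hφ.monotone_rightDeriv (ht j.le_succ)))

end Comparison

/-- For finite measures with finite first moments, equal mass and equal barycenter,
the convex order is equivalent to the pointwise comparison of potential functions. -/
theorem convexOrder_iff_potential_le (μ ν : Measure ℝ)
    [IsFiniteMeasure μ] [IsFiniteMeasure ν]
    (hμ : Integrable (fun x : ℝ => x) μ) (hν : Integrable (fun x : ℝ => x) ν)
    (hmass : μ Set.univ = ν Set.univ)
    (hbar : ∫ x, x ∂μ = ∫ x, x ∂ν) :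
    ConvexOrder μ ν ↔ ∀ t : ℝ, potentialFn μ t ≤ potentialFn ν t := by
  constructor
  · intro h t
    exact h _ (convexOn_univ_dist t) (hμ.sub (integrable_const t)).abs
      (hν.sub (integrable_const t)).abs
  · intro hpot φ hφ hφμ hφν
    exact le_of_tendsto_of_tendsto' (hφ.tendsto_integral_supportApprox hμ hφμ)
      (hφ.tendsto_integral_supportApprox hν hφν) fun n =>
        hφ.integral_supportMax_le (monotone_grid n) hμ hν (integral_affine_eq hμ hν hmass hbar)
          (integral_max_affine_zero_le hμ hν hmass hbar hpot) _
end

section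
/- Let T ⊆ ℝ be a closed set and let P_T be the Kellerer dilation onto T. Then P_T is a 1-Lipschitz kernel on [inf T, sup T]: for all x, x' ∈ [inf T, sup T], the Wasserstein-1 distance satisfies W(P_T(x,·), P_T(x',·)) ≤ |x − x'|. -/
open MeasureTheory
open scoped Classical

/-- The support of a measure on a topological space. -/
def msupport {α : Type*} [TopologicalSpace α] [MeasurableSpace α] (μ : Measure α) : Set α :=
  {x | ∀ U : Set α, IsOpen U → x ∈ U → 0 < μ U}

/-- The Kellerer dilation onto a closed set `T`: the point mass at `x` if `x ∈ T`, and
otherwise the two-point martingale measure on the nearest points of `T` below and above `x`. -/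

noncomputable def kellererDilation (T : Set ℝ) (x : ℝ) : Measure ℝ :=
  if x ∈ T then Measure.dirac x
  else
    ENNReal.ofReal ((sInf (T ∩ Set.Ici x) - x) / (sInf (T ∩ Set.Ici x) - sSup (T ∩ Set.Iic x))) •
        Measure.dirac (sSup (T ∩ Set.Iic x)) +
      ENNReal.ofReal ((x - sSup (T ∩ Set.Iic x)) / (sInf (T ∩ Set.Ici x) - sSup (T ∩ Set.Iic x))) •
        Measure.dirac (sInf (T ∩ Set.Ici x))

open Set

/-!
Write `g x = ∫ f ∂(kellererDilation T x)`. Then `g = f` on `T`, and on each gap `(a, b)` of `T`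
the function `g` is the affine interpolation of `f` between `a` and `b`, which is 1-Lipschitz
and agrees with `f` at both endpoints. Hence `|g x - f t| ≤ |x - t|` for every `t ∈ T`. For
`x ≤ x'`, either some `t ∈ T` lies in `[x, x']`, and the triangle inequality through `f t`
concludes, or `x` and `x'` lie in the same gap, where `g` is 1-Lipschitz.
-/

section LinearInterp

variable {f : ℝ → ℝ} {a b : ℝ}

noncomputable def linearInterp (f : ℝ → ℝ) (a b y : ℝ) : ℝ :=
  f a + slope f a b * (y - a)

@[simp]
lemma linearInterp_left : linearInterp f a b a = f a := by
  simp [linearInterp]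

@[simp]
lemma linearInterp_right : linearInterp f a b b = f b := by
  rw [linearInterp, mul_comm, ← smul_eq_mul, sub_smul_slope, vsub_eq_sub, add_sub_cancel]

lemma LipschitzWith.abs_slope_le {K : NNReal} (hf : LipschitzWith K f) (a b : ℝ) :
    |slope f a b| ≤ K := by
  have h := hf.dist_le_mul b a
  rw [Real.dist_eq, Real.dist_eq] at h
  rw [slope_def_field, abs_div]
  exact div_le_of_le_mul₀ (abs_nonneg _) K.coe_nonneg h

lemma lipschitzWith_linearInterp {K : NNReal} (hf : LipschitzWith K f) (a b : ℝ) :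
    LipschitzWith K (linearInterp f a b) :=
  LipschitzWith.of_dist_le_mul fun y y' => by
    rw [Real.dist_eq, Real.dist_eq, linearInterp, linearInterp, add_sub_add_left_eq_sub,
      ← mul_sub, sub_sub_sub_cancel_right, abs_mul]
    exact mul_le_mul_of_nonneg_right (hf.abs_slope_le a b) (abs_nonneg _)

end LinearInterp

lemma LipschitzWith.dist_le_of_apply_eq {α : Type*} [PseudoMetricSpace α] {g h : ℝ → α} (hg : LipschitzWith 1 g)
    (hh : LipschitzWith 1 h) {c x t : ℝ} (hc : g c = h c) (hcxt : c ∈ uIcc x t) :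
    dist (g x) (h t) ≤ dist x t := by
  calc dist (g x) (h t) ≤ dist (g x) (g c) + dist (h c) (h t) := hc ▸ dist_triangle _ _ _
    _ ≤ dist x c + dist c t := by
      gcongr
      · simpa using hg.dist_le_mul x c
      · simpa using hh.dist_le_mul c t
    _ = dist x t := dist_add_dist_of_mem_segment (segment_eq_uIcc x t ▸ hcxt)

section Neighbours

variable {T : Set ℝ} {x : ℝ}

lemma IsClosed.sSup_inter_Iic_mem (hT : IsClosed T) (h : ∃ a ∈ T, a ≤ x) :
    sSup (T ∩ Iic x) ∈ T ∩ Iic x :=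
  (hT.inter isClosed_Iic).csSup_mem h ⟨x, fun _ ht => ht.2⟩

lemma IsClosed.sInf_inter_Ici_mem (hT : IsClosed T) (h : ∃ b ∈ T, x ≤ b) :
    sInf (T ∩ Ici x) ∈ T ∩ Ici x :=
  (hT.inter isClosed_Ici).csInf_mem h ⟨x, fun _ ht => ht.2⟩

lemma IsClosed.sSup_inter_Iic_lt (hT : IsClosed T) (h : ∃ a ∈ T, a ≤ x) (hx : x ∉ T) :
    sSup (T ∩ Iic x) < x :=
  let ⟨haT, hax⟩ := hT.sSup_inter_Iic_mem h
  lt_of_le_of_ne hax fun hax => hx (hax ▸ haT)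

lemma IsClosed.lt_sInf_inter_Ici (hT : IsClosed T) (h : ∃ b ∈ T, x ≤ b) (hx : x ∉ T) :
    x < sInf (T ∩ Ici x) :=
  let ⟨hbT, hxb⟩ := hT.sInf_inter_Ici_mem h
  lt_of_le_of_ne' hxb fun hxb => hx (hxb ▸ hbT)

lemma le_sSup_inter_Iic {t : ℝ} (ht : t ∈ T) (htx : t ≤ x) : t ≤ sSup (T ∩ Iic x) :=
  le_csSup ⟨x, fun _ hs => hs.2⟩ ⟨ht, htx⟩

lemma sInf_inter_Ici_le {t : ℝ} (ht : t ∈ T) (hxt : x ≤ t) : sInf (T ∩ Ici x) ≤ t :=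
  csInf_le ⟨x, fun _ hs => hs.2⟩ ⟨ht, hxt⟩

variable {x' : ℝ}

lemma inter_Iic_eq_of_disjoint_Icc (h : Disjoint T (Icc x x')) (hxx : x ≤ x') :
    T ∩ Iic x = T ∩ Iic x' := by
  refine Subset.antisymm (inter_subset_inter_right T (Iic_subset_Iic.2 hxx)) ?_
  rintro t ⟨ht, htx'⟩
  refine ⟨ht, not_lt.1 fun hxt => h.notMem_of_mem_left ht ⟨hxt.le, htx'⟩⟩

lemma inter_Ici_eq_of_disjoint_Icc (h : Disjoint T (Icc x x')) (hxx : x ≤ x') :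
    T ∩ Ici x = T ∩ Ici x' := by
  refine Subset.antisymm ?_ (inter_subset_inter_right T (Ici_subset_Ici.2 hxx))
  rintro t ⟨ht, hxt⟩
  refine ⟨ht, not_lt.1 fun htx' => h.notMem_of_mem_left ht ⟨hxt, htx'.le⟩⟩

end Neighbours

section Integral

variable {T : Set ℝ} {x : ℝ} (f : ℝ → ℝ)

lemma integral_kellererDilation_of_mem (hx : x ∈ T) :
    ∫ y, f y ∂kellererDilation T x = f x := by
  rw [kellererDilation, if_pos hx, integral_dirac]

lemma integral_kellererDilation_of_notMem (hT : IsClosed T)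
    (hx : (∃ a ∈ T, a ≤ x) ∧ ∃ b ∈ T, x ≤ b) (hxT : x ∉ T) :
    ∫ y, f y ∂kellererDilation T x =
      linearInterp f (sSup (T ∩ Iic x)) (sInf (T ∩ Ici x)) x := by
  have ha := hT.sSup_inter_Iic_lt hx.1 hxT
  have hb := hT.lt_sInf_inter_Ici hx.2 hxT
  have hdirac (c : ℝ) : Integrable f (Measure.dirac c) := integrable_dirac enorm_lt_top
  rw [kellererDilation, if_neg hxT,
    integral_add_measure ((hdirac _).smul_measure ENNReal.ofReal_ne_top)
      ((hdirac _).smul_measure ENNReal.ofReal_ne_top),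
    integral_smul_measure, integral_smul_measure, integral_dirac, integral_dirac,
    ENNReal.toReal_ofReal (div_nonneg (by linarith) (by linarith)),
    ENNReal.toReal_ofReal (div_nonneg (by linarith) (by linarith)),
    linearInterp, slope_def_field, smul_eq_mul, smul_eq_mul]
  generalize sSup (T ∩ Iic x) = a at ha ⊢
  generalize sInf (T ∩ Ici x) = b at hb ⊢
  have hab : b - a ≠ 0 := by linarith
  field_simp
  ring

lemma LipschitzWith.dist_integral_kellererDilation_le (hT : IsClosed T)
    (hx : (∃ a ∈ T, a ≤ x) ∧ ∃ b ∈ T, x ≤ b) {f : ℝ → ℝ} (hf : LipschitzWith 1 f)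
    {t : ℝ} (ht : t ∈ T) :
    dist (∫ y, f y ∂kellererDilation T x) (f t) ≤ dist x t := by
  by_cases hxT : x ∈ T
  · simpa [integral_kellererDilation_of_mem f hxT] using hf.dist_le_mul x t
  rw [integral_kellererDilation_of_notMem f hT hx hxT]
  rcases le_total t x with htx | hxt
  · refine (lipschitzWith_linearInterp hf _ _).dist_le_of_apply_eq hf linearInterp_left ?_
    exact mem_uIcc.2 (Or.inr ⟨le_sSup_inter_Iic ht htx, (hT.sSup_inter_Iic_lt hx.1 hxT).le⟩)
  · refine (lipschitzWith_linearInterp hf _ _).dist_le_of_apply_eq hf linearInterp_right ?_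
    exact mem_uIcc.2 (Or.inl ⟨(hT.lt_sInf_inter_Ici hx.2 hxT).le, sInf_inter_Ici_le ht hxt⟩)

end Integral

/-- The Kellerer dilation is a 1-Lipschitz kernel on `[inf T, sup T]` for the
Wasserstein-1 distance (in its dual Kantorovich–Rubinstein formulation). -/
theorem kellererDilation_lipschitz (T : Set ℝ) (hT : IsClosed T)
    (x x' : ℝ)
    (hx : (∃ a ∈ T, a ≤ x) ∧ ∃ b ∈ T, x ≤ b)
    (hx' : (∃ a ∈ T, a ≤ x') ∧ ∃ b ∈ T, x' ≤ b) :
    ∀ f : ℝ → ℝ, LipschitzWith 1 f →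
      |∫ y, f y ∂(kellererDilation T x) - ∫ y, f y ∂(kellererDilation T x')| ≤ |x - x'| := by
  intro f hf
  wlog hxx : x ≤ x' generalizing x x'
  · rw [abs_sub_comm, abs_sub_comm x]
    exact this x' x hx' hx (le_of_not_ge hxx)
  rw [← Real.dist_eq, ← Real.dist_eq]
  by_cases hgap : Disjoint T (Icc x x')
  · have hxT : x ∉ T := fun h => hgap.notMem_of_mem_left h ⟨le_rfl, hxx⟩
    have hx'T : x' ∉ T := fun h => hgap.notMem_of_mem_left h ⟨hxx, le_rfl⟩
    rw [integral_kellererDilation_of_notMem f hT hx hxT,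
      integral_kellererDilation_of_notMem f hT hx' hx'T, inter_Iic_eq_of_disjoint_Icc hgap hxx,
      inter_Ici_eq_of_disjoint_Icc hgap hxx]
    simpa using (lipschitzWith_linearInterp hf _ _).dist_le_mul x x'
  · obtain ⟨t, htT, htx, hxt⟩ := not_disjoint_iff.1 hgap
    calc _ ≤ dist (∫ y, f y ∂kellererDilation T x) (f t) +
          dist (∫ y, f y ∂kellererDilation T x') (f t) := dist_triangle_right _ _ _
      _ ≤ dist x t + dist x' t :=
        add_le_add (hf.dist_integral_kellererDilation_le hT hx htT)
          (hf.dist_integral_kellererDilation_le hT hx' htT)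
      _ = dist x x' := by
        rw [dist_comm x' t]
        exact dist_add_dist_of_mem_segment (segment_eq_Icc hxx ▸ ⟨htx, hxt⟩)
end

section
/- Let δ = α·δ_x be an atom of mass α at x and suppose δ ≤_{c,+} ν for a finite measure ν on ℝ with finite first moment. Then the shadow S^ν(δ) equals the restriction of ν between two quantiles: S^ν(δ) = (G_ν)_#(λ restricted to (s, s+α)) where G_ν is the quantile function of ν, and s is chosen so that this measure has barycenter x. -/
open MeasureTheory

/-- `μ ≤_{c,+} ν`: there exists `η` with `μ ≤_c η` and `η ≤ ν` setwise. -/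
def ConvexPlusOrder (μ ν : Measure ℝ) : Prop :=
  ∃ η : Measure ℝ, ConvexOrder μ η ∧ η ≤ ν

/-- `η` is the shadow of `μ` in `ν`: the `≤_c`-smallest measure `η` with `μ ≤_c η`
and `η ≤ ν`. -/
def IsShadow (μ ν η : Measure ℝ) : Prop :=
  ConvexOrder μ η ∧ η ≤ ν ∧
    ∀ η' : Measure ℝ, ConvexOrder μ η' → η' ≤ ν → ConvexOrder η η'

/-!
Let `κ_s = G_#(λ|(s, s + α))`, so that `ν = G_#(λ|(0, m))`. A measure `η ≤ ν` can charge the open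
range `(G (s+), G (s + α))` of `κ_s` only through levels in `(s, s + α)`, so there `η ≤ κ_s`, while
`κ_s` lives on the closed range. If `η` also has mass `α` and barycenter `x`, take a convex `φ` and
its chord `ℓ` over that range: `φ - ℓ` is nonpositive inside and nonnegative outside, whence
`∫ (φ - ℓ) dκ_s ≤ ∫ (φ - ℓ) dη`, i.e. `∫ φ dκ_s ≤ ∫ φ dη`. The same comparison with linear test
functions puts the barycenters of the lowest band `κ_0` and of the highest band `κ_{m-α}` on
either side of `x`, so a suitable `s` exists by the intermediate value theorem.
-/

open Set

section ConvexFunction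

variable {φ : ℝ → ℝ}

theorem ConvexOn.exists_supporting_line (hφ : ConvexOn ℝ univ φ) (x : ℝ) :
    ∃ p : ℝ, ∀ y, φ x + p * (y - x) ≤ φ y := by
  refine ⟨derivWithin φ (Ioi x) x, fun y => ?_⟩
  have hx : x ∈ interior univ := by simp
  rcases lt_trichotomy y x with hyx | rfl | hxy
  · have h := (hφ.slope_le_leftDeriv_of_mem_interior (mem_univ y) hx hyx).trans
      (hφ.leftDeriv_le_rightDeriv_of_mem_interior hx)
    rw [slope_def_field, div_le_iff₀ (sub_pos.2 hyx)] at h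
    nlinarith
  · simp
  · have h := hφ.rightDeriv_le_slope_of_mem_interior hx (mem_univ y) hxy
    rw [slope_def_field, le_div_iff₀ (sub_pos.2 hxy)] at h
    linarith

/-- For `a < b` the line is the secant through `(a, φ a)` and `(b, φ b)`; for `a = b` it is a
supporting line at `a`. -/
theorem ConvexOn.exists_affine_chord (hφ : ConvexOn ℝ univ φ) {a b : ℝ} (hab : a ≤ b) :
    ∃ p q : ℝ, (∀ y ∈ Icc a b, φ y ≤ p * y + q) ∧ ∀ y ∉ Ioo a b, p * y + q ≤ φ y := by
  rcases hab.eq_or_lt with rfl | hab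
  · obtain ⟨p, hp⟩ := hφ.exists_supporting_line a
    refine ⟨p, φ a - p * a, fun y hy => ?_, fun y _ => ?_⟩
    · rw [Icc_self, mem_singleton_iff] at hy
      subst hy
      linarith
    · linarith [hp y]
  have hφy : ∀ y, φ y = φ a + (y - a) * slope φ a y := fun y => by
    rw [← smul_eq_mul, sub_smul_slope, vsub_eq_sub]; ring
  refine ⟨slope φ a b, φ a - slope φ a b * a, fun y hy => ?_, fun y hy => ?_⟩
  · rcases hy.1.eq_or_lt with rfl | hay
    · linarith
    have h := hφ.slope_mono (mem_univ a) ⟨mem_univ y, hay.ne'⟩ ⟨mem_univ b, hab.ne'⟩ hy.2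
    rw [hφy y]
    nlinarith
  rcases lt_trichotomy y a with hya | rfl | hay
  · have h := hφ.slope_mono (mem_univ a) ⟨mem_univ y, hya.ne⟩ ⟨mem_univ b, hab.ne'⟩
      (hya.trans hab).le
    rw [hφy y]
    nlinarith
  · linarith
  · have hby : b ≤ y := not_lt.1 fun hyb => hy ⟨hay, hyb⟩
    have h := hφ.slope_mono (mem_univ a) ⟨mem_univ b, hab.ne'⟩ ⟨mem_univ y, hay.ne'⟩ hby
    rw [hφy y]
    nlinarith

end ConvexFunction

section SignChange

variable {X : Type*} [MeasurableSpace X] {κ η : Measure X} {U : Set X} {g : X → ℝ}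

theorem integral_le_integral_of_restrict_le (hU : MeasurableSet U)
    (hle : η.restrict U ≤ κ.restrict U) (hgU : ∀ y ∈ U, g y ≤ 0) (hgUc : ∀ y ∉ U, 0 ≤ g y)
    (hκ : ∀ᵐ y ∂κ, y ∉ U → g y = 0) (hgκ : Integrable g κ) (hgη : Integrable g η) :
    ∫ y, g y ∂κ ≤ ∫ y, g y ∂η := by
  have on_U : ∫ y in U, g y ∂κ ≤ ∫ y in U, g y ∂η := by
    have hneg : 0 ≤ᵐ[κ.restrict U] fun y => -g y :=
      (ae_restrict_iff' hU).2 (ae_of_all _ fun y hy => neg_nonneg.2 (hgU y hy))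
    have h := integral_mono_measure hle hneg hgκ.neg.restrict
    rw [integral_neg, integral_neg] at h
    linarith
  have off_U_κ : ∫ y in Uᶜ, g y ∂κ = 0 := setIntegral_eq_zero_of_ae_eq_zero hκ
  have off_U_η : 0 ≤ ∫ y in Uᶜ, g y ∂η := setIntegral_nonneg hU.compl hgUc
  rw [← integral_add_compl hU hgκ, ← integral_add_compl hU hgη]
  linarith

end SignChange

theorem integral_mul_add_const {μ : Measure ℝ} [IsFiniteMeasure μ]
    (hμ : Integrable (fun y => y) μ) (p q : ℝ) :
    ∫ y, (p * y + q) ∂μ = p * ∫ y, y ∂μ + q * μ.real univ := by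
  rw [integral_add (hμ.const_mul p) (integrable_const q), integral_const_mul, integral_const,
    smul_eq_mul, mul_comm q]

theorem ConvexOrder.measureReal_univ_eq {μ η : Measure ℝ} [IsFiniteMeasure μ]
    [IsFiniteMeasure η] (h : ConvexOrder μ η) : μ.real univ = η.real univ := by
  have h₁ := h (fun _ => 1) (convexOn_const 1 convex_univ) (integrable_const 1) (integrable_const 1)
  have h₂ := h (fun _ => -1) (convexOn_const (-1) convex_univ) (integrable_const (-1))
    (integrable_const (-1))
  simp only [integral_const, smul_eq_mul] at h₁ h₂
  linarith

theorem ConvexOrder.integral_id_eq {μ η : Measure ℝ} (h : ConvexOrder μ η)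
    (hμ : Integrable (fun y => y) μ) (hη : Integrable (fun y => y) η) :
    ∫ y, y ∂μ = ∫ y, y ∂η := by
  have h₁ := h (fun y => y) (convexOn_id convex_univ) hμ hη
  have h₂ : ∫ y, -y ∂μ ≤ ∫ y, -y ∂η := h _ (concaveOn_id convex_univ).neg hμ.neg hη.neg
  rw [integral_neg, integral_neg] at h₂
  linarith

theorem integral_smul_dirac {α : ℝ} (hα : 0 ≤ α) (x : ℝ) (f : ℝ → ℝ) :
    ∫ y, f y ∂(ENNReal.ofReal α • Measure.dirac x) = α * f x := by
  rw [integral_smul_measure, integral_dirac, ENNReal.toReal_ofReal hα, smul_eq_mul]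

theorem ConvexOrder.moments_of_smul_dirac {α x : ℝ} (hα : 0 ≤ α) {η : Measure ℝ}
    [IsFiniteMeasure η] (h : ConvexOrder (ENNReal.ofReal α • Measure.dirac x) η)
    (hint : Integrable (fun y => y) η) : η.real univ = α ∧ ∫ y, y ∂η = α * x := by
  have := (Measure.dirac x).smul_finite (ENNReal.ofReal_ne_top (r := α))
  have hδ : Integrable (fun y => y) (ENNReal.ofReal α • Measure.dirac x) :=
    (integrable_dirac enorm_lt_top).smul_measure ENNReal.ofReal_ne_top
  rw [← h.measureReal_univ_eq, ← h.integral_id_eq hδ hint]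
  exact ⟨by simp [hα], integral_smul_dirac hα x _⟩

theorem convexOrder_smul_dirac {α x : ℝ} (hα : 0 ≤ α) {η : Measure ℝ} [IsFiniteMeasure η]
    (hint : Integrable (fun y => y) η) (hmass : η.real univ = α) (hbary : ∫ y, y ∂η = α * x) :
    ConvexOrder (ENNReal.ofReal α • Measure.dirac x) η := by
  intro φ hφ _ hφη
  obtain ⟨p, q, hx, hle⟩ := hφ.exists_affine_chord (le_refl x)
  calc ∫ y, φ y ∂(ENNReal.ofReal α • Measure.dirac x)
      = α * φ x := integral_smul_dirac hα x φ
    _ ≤ α * (p * x + q) := mul_le_mul_of_nonneg_left (hx x ⟨le_rfl, le_rfl⟩) hα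
    _ = ∫ y, (p * y + q) ∂η := by rw [integral_mul_add_const hint, hbary, hmass]; ring
    _ ≤ ∫ y, φ y ∂η := integral_mono ((hint.const_mul p).add (integrable_const q)) hφη
        fun y => hle y (by simp)

/-- When `G` is the quantile function of `ν`, the part of `ν` between its `a`- and
`b`-quantiles. -/
noncomputable def quantileBand (G : ℝ → ℝ) (a b : ℝ) : Measure ℝ :=
  (volume.restrict (Ioo a b)).map G

namespace quantileBand

variable {G : ℝ → ℝ} {a b c d : ℝ}

instance : IsFiniteMeasure (quantileBand G a b) := by
  unfold quantileBand; infer_instance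

theorem measureReal_univ (hG : Measurable G) (hab : a ≤ b) :
    (quantileBand G a b).real univ = b - a := by
  rw [quantileBand, measureReal_def, Measure.map_apply hG MeasurableSet.univ, preimage_univ,
    Measure.restrict_apply_univ, Real.volume_Ioo, ENNReal.toReal_ofReal (sub_nonneg.2 hab)]

theorem integral_id (hG : Measurable G) : ∫ y, y ∂quantileBand G a b = ∫ t in Ioo a b, G t :=
  integral_map hG.aemeasurable aestronglyMeasurable_id

theorem integrable_id (hG : Monotone G) : Integrable (fun y => y) (quantileBand G a b) :=
  (integrable_map_measure aestronglyMeasurable_id hG.measurable.aemeasurable).2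
    (hG.locallyIntegrable.integrableOn_isCompact isCompact_Icc |>.mono_set Ioo_subset_Icc_self)

theorem mono (hG : Measurable G) (hca : c ≤ a) (hbd : b ≤ d) :
    quantileBand G a b ≤ quantileBand G c d :=
  Measure.map_mono (Measure.restrict_mono (Ioo_subset_Ioo hca hbd) le_rfl) hG

theorem restrict_le (hG : Measurable G) {U : Set ℝ} (hU : MeasurableSet U)
    (h : ∀ t ∈ Ioo c d, G t ∈ U → t ∈ Ioo a b) :
    (quantileBand G c d).restrict U ≤ (quantileBand G a b).restrict U := by
  simp only [quantileBand, Measure.restrict_map hG hU, Measure.restrict_restrict (hG hU)]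
  have hsub : G ⁻¹' U ∩ Ioo c d ⊆ G ⁻¹' U ∩ Ioo a b := fun t ht => ⟨ht.1, h t ht.2 ht.1⟩
  exact Measure.map_mono (Measure.restrict_mono hsub le_rfl) hG

theorem ae_mem (hG : Measurable G) {S : Set ℝ} (hS : MeasurableSet S)
    (h : ∀ t ∈ Ioo a b, G t ∈ S) : ∀ᵐ y ∂quantileBand G a b, y ∈ S :=
  (ae_map_iff hG.aemeasurable hS).2 ((ae_restrict_iff' measurableSet_Ioo).2 (ae_of_all _ h))

theorem continuous_integral_id (hG : Monotone G) {α : ℝ} (hα : 0 ≤ α) :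
    Continuous fun s => ∫ y, y ∂quantileBand G s (s + α) := by
  have hii : ∀ a b : ℝ, IntervalIntegrable G volume a b := fun _ _ => hG.intervalIntegrable
  have hprim := intervalIntegral.continuous_primitive hii 0
  convert (hprim.comp (continuous_add_const α)).sub hprim using 1
  ext s
  rw [integral_id hG.measurable, Pi.sub_apply, Function.comp_apply,
    intervalIntegral.integral_interval_sub_left (hii _ _) (hii _ _),
    intervalIntegral.integral_of_le (by linarith), integral_Ioc_eq_integral_Ioo]

end quantileBand

section BandComparison

open quantileBand

variable {G : ℝ → ℝ} {a b c d : ℝ} {η : Measure ℝ} [IsFiniteMeasure η]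

theorem integral_id_quantileBand_le (hG : Monotone G) (hab : a ≤ b)
    (hη : η ≤ quantileBand G a c) (hint : Integrable (fun y => y) η)
    (hmass : η.real univ = b - a) :
    ∫ y, y ∂quantileBand G a b ≤ ∫ y, y ∂η := by
  have key := integral_le_integral_of_restrict_le (κ := quantileBand G a b) (η := η)
    (g := fun y => y - G b) measurableSet_Iio
    ((Measure.restrict_mono subset_rfl hη).trans <| restrict_le hG.measurable measurableSet_Iio
      fun t ht hGt => ⟨ht.1, hG.reflect_lt hGt⟩)
    (fun y hy => sub_nonpos.2 (le_of_lt hy)) (fun y hy => sub_nonneg.2 (not_lt.1 hy))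
    ((ae_mem hG.measurable measurableSet_Iic fun t ht => hG ht.2.le).mono
      fun y hy hyU => sub_eq_zero.2 (le_antisymm hy (not_lt.1 hyU)))
    ((integrable_id hG).sub (integrable_const _)) (hint.sub (integrable_const _))
  rw [integral_sub (integrable_id hG) (integrable_const _), integral_sub hint (integrable_const _),
    integral_const, integral_const, measureReal_univ hG.measurable hab, hmass] at key
  linarith

theorem integral_id_le_quantileBand (hG : Monotone G) (hbc : b ≤ c)
    (hη : η ≤ quantileBand G a c) (hint : Integrable (fun y => y) η)
    (hmass : η.real univ = c - b) :
    ∫ y, y ∂η ≤ ∫ y, y ∂quantileBand G b c := by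
  have key := integral_le_integral_of_restrict_le (κ := quantileBand G b c) (η := η)
    (g := fun y => Function.rightLim G b - y) measurableSet_Ioi
    ((Measure.restrict_mono subset_rfl hη).trans <| restrict_le hG.measurable measurableSet_Ioi
      fun t ht hGt => ⟨lt_of_not_ge fun htb => (hG.le_rightLim htb).not_gt hGt, ht.2⟩)
    (fun y hy => sub_nonpos.2 (le_of_lt hy)) (fun y hy => sub_nonneg.2 (not_lt.1 hy))
    ((ae_mem hG.measurable measurableSet_Ici fun t ht => hG.rightLim_le ht.1).mono
      fun y hy hyU => sub_eq_zero.2 (le_antisymm hy (not_lt.1 hyU)))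
    ((integrable_const _).sub (integrable_id hG)) ((integrable_const _).sub hint)
  rw [integral_sub (integrable_const _) (integrable_id hG), integral_sub (integrable_const _) hint,
    integral_const, integral_const, measureReal_univ hG.measurable hbc, hmass] at key
  linarith

theorem convexOrder_quantileBand_of_le (hG : Monotone G) (hab : a < b)
    (hη : η ≤ quantileBand G c d) (hint : Integrable (fun y => y) η)
    (hmass : η.real univ = b - a) (hbary : ∫ y, y ∂η = ∫ y, y ∂quantileBand G a b) :
    ConvexOrder (quantileBand G a b) η := by
  intro φ hφ hφκ hφη
  obtain ⟨p, q, hin, hout⟩ := hφ.exists_affine_chord (hG.rightLim_le hab)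
  have hℓκ : Integrable (fun y => p * y + q) (quantileBand G a b) :=
    ((integrable_id hG).const_mul p).add (integrable_const q)
  have hℓη : Integrable (fun y => p * y + q) η := (hint.const_mul p).add (integrable_const q)
  have key := integral_le_integral_of_restrict_le (κ := quantileBand G a b) (η := η)
    (g := fun y => φ y - (p * y + q)) measurableSet_Ioo
    ((Measure.restrict_mono subset_rfl hη).trans <| restrict_le hG.measurable measurableSet_Ioo
      fun t _ hGt => ⟨lt_of_not_ge fun hta => (hG.le_rightLim hta).not_gt hGt.1,
        hG.reflect_lt hGt.2⟩)
    (fun y hy => sub_nonpos.2 (hin y (Ioo_subset_Icc_self hy)))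
    (fun y hy => sub_nonneg.2 (hout y hy))
    ((ae_mem hG.measurable measurableSet_Icc fun t ht => ⟨hG.rightLim_le ht.1, hG ht.2.le⟩).mono
      fun y hy hyU => sub_eq_zero.2 (le_antisymm (hin y hy) (hout y hyU)))
    (hφκ.sub hℓκ) (hφη.sub hℓη)
  have hℓ : ∫ y, (p * y + q) ∂quantileBand G a b = ∫ y, (p * y + q) ∂η := by
    rw [integral_mul_add_const (integrable_id hG), integral_mul_add_const hint, hbary, hmass,
      measureReal_univ hG.measurable hab.le]
  rw [integral_sub hφκ hℓκ, integral_sub hφη hℓη, hℓ] at key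
  linarith

theorem exists_integral_id_quantileBand_eq (hG : Monotone G) {α : ℝ} (hα : 0 ≤ α)
    (hac : a + α ≤ c) (hη : η ≤ quantileBand G a c) (hint : Integrable (fun y => y) η)
    (hmass : η.real univ = α) :
    ∃ s ∈ Icc a (c - α), ∫ y, y ∂quantileBand G s (s + α) = ∫ y, y ∂η := by
  have hlow : ∫ y, y ∂quantileBand G a (a + α) ≤ ∫ y, y ∂η :=
    integral_id_quantileBand_le hG (by linarith) hη hint (by rw [hmass]; ring)
  have hupp : ∫ y, y ∂η ≤ ∫ y, y ∂quantileBand G (c - α) (c - α + α) := by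
    rw [sub_add_cancel]
    exact integral_id_le_quantileBand hG (by linarith) hη hint (by rw [hmass]; ring)
  exact intermediate_value_Icc (by linarith) (continuous_integral_id hG hα).continuousOn
    ⟨hlow, hupp⟩

end BandComparison

open quantileBand in
theorem shadow_of_atom_general (ν : Measure ℝ) [IsFiniteMeasure ν]
    (hν : Integrable (fun x : ℝ => x) ν)
    (α x : ℝ) (hα : 0 < α)
    (h : ConvexPlusOrder (ENNReal.ofReal α • Measure.dirac x) ν)
    (G : ℝ → ℝ) (hG : Monotone G)
    (hGν : (volume.restrict (Set.Ioo 0 (ν Set.univ).toReal)).map G = ν) :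
    ∃ s : ℝ, 0 ≤ s ∧ s + α ≤ (ν Set.univ).toReal ∧
      IsShadow (ENNReal.ofReal α • Measure.dirac x) ν
        ((volume.restrict (Set.Ioo s (s + α))).map G) ∧
      ∫ y, y ∂((volume.restrict (Set.Ioo s (s + α))).map G) = α * x := by
  set m := (ν univ).toReal
  change quantileBand G 0 m = ν at hGν
  obtain ⟨η₀, hδη₀, hη₀ν⟩ := h
  have := isFiniteMeasure_of_le ν hη₀ν
  obtain ⟨hmass₀, hbary₀⟩ := hδη₀.moments_of_smul_dirac hα.le (hν.mono_measure hη₀ν)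
  have hαm : 0 + α ≤ m := by
    rw [zero_add, ← hmass₀]
    exact ENNReal.toReal_mono (measure_ne_top ν _) (hη₀ν univ)
  obtain ⟨s, ⟨hs0, hsm⟩, hbary⟩ := exists_integral_id_quantileBand_eq hG hα.le hαm
    (hη₀ν.trans_eq hGν.symm) (hν.mono_measure hη₀ν) hmass₀
  rw [hbary₀] at hbary
  have hmass : (quantileBand G s (s + α)).real univ = α := by
    rw [measureReal_univ hG.measurable (by linarith), add_sub_cancel_left]
  refine ⟨s, hs0, by linarith, ⟨convexOrder_smul_dirac hα.le (integrable_id hG) hmass hbary,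
    (mono hG.measurable hs0 (by linarith)).trans_eq hGν, fun η hδη hην => ?_⟩, hbary⟩
  have := isFiniteMeasure_of_le ν hην
  obtain ⟨hmassη, hbaryη⟩ := hδη.moments_of_smul_dirac hα.le (hν.mono_measure hην)
  exact convexOrder_quantileBand_of_le hG (lt_add_of_pos_right s hα) (hην.trans_eq hGν.symm)
    (hν.mono_measure hην) (by rw [hmassη, add_sub_cancel_left]) (hbaryη.trans hbary.symm)

/-- Shadow of an atom: if `δ = α·δ_x ≤_{c,+} ν`, then `S^ν(δ)` is the restriction of `ν`
between two quantiles, i.e. the image under the quantile function `G_ν` of Lebesgue measure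
on an interval `(s, s + α)`, where `s` is chosen so that the barycenter is `x`. -/
theorem shadow_of_atom (ν : Measure ℝ) [IsFiniteMeasure ν]
    (hν : Integrable (fun x : ℝ => x) ν)
    (α x : ℝ) (hα : 0 < α)
    (h : ConvexPlusOrder (ENNReal.ofReal α • Measure.dirac x) ν)
    (G : ℝ → ℝ) (hG : Monotone G)
    (hGl : ∀ t : ℝ, ContinuousWithinAt G (Set.Iio t) t)
    (hGν : (volume.restrict (Set.Ioo 0 (ν Set.univ).toReal)).map G = ν) :
    ∃ s : ℝ, 0 ≤ s ∧ s + α ≤ (ν Set.univ).toReal ∧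
      IsShadow (ENNReal.ofReal α • Measure.dirac x) ν
        ((volume.restrict (Set.Ioo s (s + α))).map G) ∧
      ∫ y, y ∂((volume.restrict (Set.Ioo s (s + α))).map G) = α * x :=
  shadow_of_atom_general ν hν α x hα h G hG hGν
end

section
/- Suppose π̂ ∈ Π(μ̂, ν) is the lifted shadow coupling, i.e. for every u ∈ [0,1] the second marginal of π̂ restricted to [0,u] × ℝ × ℝ equals S^ν(μ_{[0,u]}). Then for every p ∈ [0,1] and q ∈ ℝ, π̂ minimizes γ̂ ↦ ∫ 1_{u ≤ p}|y − q| dγ̂(u, x, y) over all lifted martingale couplings γ̂ ∈ Π(μ̂, ν) with ∫y dγ̂_{u,x} = x μ̂-a.e. -/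
open MeasureTheory

/-- `π̂` is a lifted martingale coupling of the lift `μ̂ ∈ Π(λ, μ)` and `ν`:
its `(u,x)`-marginal is `μ̂`, its `y`-marginal is `ν`, and `∫ y dπ̂_{u,x}(y) = x` for
`μ̂`-a.e. `(u,x)`, expressed via `∫ (y - x) f(u,x) dπ̂ = 0` for all bounded measurable `f`. -/
def IsLiftedMartingaleCoupling (πh : Measure (ℝ × ℝ × ℝ)) (μh : Measure (ℝ × ℝ))
    (ν : Measure ℝ) : Prop :=
  πh.map (fun p => (p.1, p.2.1)) = μh ∧ πh.map (fun p => p.2.2) = ν ∧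
    ∀ f : ℝ × ℝ → ℝ, Measurable f → (∀ q, |f q| ≤ 1) →
      ∫ p, (p.2.2 - p.2.1) * f (p.1, p.2.1) ∂πh = 0

/-- The primitive curve `μ_{[0,u]}(A) = μ̂([0,u] × A)` of a lift `μ̂`. -/
noncomputable def liftCurve (μh : Measure (ℝ × ℝ)) (u : ℝ) : Measure ℝ :=
  (μh.restrict {a : ℝ × ℝ | a.1 ≤ u}).map Prod.snd

/-- The `y`-marginal of `π̂` restricted to `[0,u] × ℝ × ℝ`. -/
noncomputable def liftedCouplingCurve (πh : Measure (ℝ × ℝ × ℝ)) (u : ℝ) : Measure ℝ :=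
  (πh.restrict {p : ℝ × ℝ × ℝ | p.1 ≤ u}).map (fun p => p.2.2)

/-! The marginal `y`-curve of a lifted martingale coupling restricted to `{u ≤ p}` always
dominates `μ_{[0,p]}` in convex order: conditioning on `(u, x)` turns the martingale property into
`𝔼[y | u, x] = x`, and conditional Jensen gives `∫ φ(x) ≤ ∫ φ(y)` on the `(u, x)`-measurable set
`{u ≤ p}`. It is also dominated by `ν`, so by minimality of the shadow
`S^ν(μ_{[0,p]}) ≤_c β^p`; testing with the convex function `|· - q|` gives the claim. -/

open Set

theorem ConvexOn.integral_comp_le_of_condExp_ae_eq {α : Type*} {m mα : MeasurableSpace α}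
    {ρ : Measure α} (hm : m ≤ mα) [SigmaFinite (ρ.trim hm)] {φ : ℝ → ℝ}
    (hφ : ConvexOn ℝ univ φ) {X Y : α → ℝ} (hXY : ρ[Y | m] =ᵐ[ρ] X) (hY : Integrable Y ρ)
    (hφX : Integrable (φ ∘ X) ρ) (hφY : Integrable (φ ∘ Y) ρ) :
    ∫ a, φ (X a) ∂ρ ≤ ∫ a, φ (Y a) ∂ρ := by
  have hφ_comp : φ ∘ X =ᵐ[ρ] φ ∘ ρ[Y | m] := hXY.symm.fun_comp φ
  calc ∫ a, φ (X a) ∂ρ = ∫ a, φ (ρ[Y | m] a) ∂ρ := integral_congr_ae hφ_comp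
    _ ≤ ∫ a, ρ[φ ∘ Y | m] a ∂ρ :=
        integral_mono_ae (hφX.congr hφ_comp) integrable_condExp
          (hφ.map_condExp_le_of_finiteDimensional hm hY hφY)
    _ = ∫ a, φ (Y a) ∂ρ := integral_condExp hm

def IsLiftedMartingale (γ : Measure (ℝ × ℝ × ℝ)) : Prop :=
  ∀ f : ℝ × ℝ → ℝ, Measurable f → (∀ q, |f q| ≤ 1) →
    ∫ r, (r.2.2 - r.2.1) * f (r.1, r.2.1) ∂γ = 0

abbrev sigmaUX : MeasurableSpace (ℝ × ℝ × ℝ) :=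
  MeasurableSpace.comap (fun r => (r.1, r.2.1)) inferInstance

lemma sigmaUX_le : sigmaUX ≤ (inferInstance : MeasurableSpace (ℝ × ℝ × ℝ)) :=
  (measurable_fst.prodMk measurable_snd.fst).comap_le

namespace IsLiftedMartingale

variable {γ : Measure (ℝ × ℝ × ℝ)}

lemma restrict_fst_le (h : IsLiftedMartingale γ) (p : ℝ) :
    IsLiftedMartingale (γ.restrict {r | r.1 ≤ p}) := by
  intro f hf hf_le
  rw [← integral_indicator (measurableSet_le measurable_fst measurable_const),
    ← h (fun a => if a.1 ≤ p then f a else 0)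
      (hf.ite (measurableSet_le measurable_fst measurable_const) measurable_const)
      (fun a => by split_ifs <;> simp [hf_le])]
  congr 1 with r
  by_cases hr : r.1 ≤ p <;> simp [hr]

lemma condExp_ae_eq [IsFiniteMeasure γ] (h : IsLiftedMartingale γ)
    (hx : Integrable (fun r => r.2.1) γ) (hy : Integrable (fun r => r.2.2) γ) :
    γ[fun r => r.2.2 | sigmaUX] =ᵐ[γ] fun r => r.2.1 := by
  refine (ae_eq_condExp_of_forall_setIntegral_eq sigmaUX_le hy (fun _ _ _ => hx.integrableOn)
    ?_ ?_).symm
  · rintro _ ⟨t, ht, rfl⟩ -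
    have hs : MeasurableSet ((fun r : ℝ × ℝ × ℝ => (r.1, r.2.1)) ⁻¹' t) :=
      (measurable_fst.prodMk measurable_snd.fst) ht
    have h0 := h (t.indicator 1) (measurable_const.indicator ht)
      (fun a => by by_cases ha : a ∈ t <;> simp [ha])
    have hset : ∫ r in (fun r : ℝ × ℝ × ℝ => (r.1, r.2.1)) ⁻¹' t, (r.2.2 - r.2.1) ∂γ = 0 := by
      rw [← h0, ← integral_indicator hs]
      congr 1 with r
      by_cases hr : (r.1, r.2.1) ∈ t <;> simp [hr]
    rw [integral_sub hy.integrableOn hx.integrableOn] at hset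
    linarith
  · exact (measurable_snd.comp (comap_measurable _)).aestronglyMeasurable

end IsLiftedMartingale

section LiftedCoupling

variable {μ ν : Measure ℝ} {μh : Measure (ℝ × ℝ)} {γh : Measure (ℝ × ℝ × ℝ)}

lemma IsLiftedMartingaleCoupling.isFiniteMeasure [IsFiniteMeasure ν]
    (hγ : IsLiftedMartingaleCoupling γh μh ν) : IsFiniteMeasure γh :=
  (Measure.isFiniteMeasure_map_iff measurable_snd.snd.aemeasurable).1 (hγ.2.1 ▸ inferInstance)

lemma IsLiftedMartingaleCoupling.map_snd_fst (hγ : IsLiftedMartingaleCoupling γh μh ν)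
    (hμ : μh.map Prod.snd = μ) : γh.map (fun r => r.2.1) = μ := by
  rw [← hμ, ← hγ.1, Measure.map_map measurable_snd (measurable_fst.prodMk measurable_snd.fst)]
  rfl

lemma IsLiftedMartingaleCoupling.liftCurve_eq (hγ : IsLiftedMartingaleCoupling γh μh ν) (p : ℝ) :
    liftCurve μh p = (γh.restrict {r | r.1 ≤ p}).map (fun r => r.2.1) := by
  rw [← hγ.1, liftCurve,
    Measure.restrict_map (measurable_fst.prodMk measurable_snd.fst)
      (measurableSet_le measurable_fst measurable_const : MeasurableSet {a : ℝ × ℝ | a.1 ≤ p}),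
    Measure.map_map measurable_snd (measurable_fst.prodMk measurable_snd.fst)]
  rfl

lemma IsLiftedMartingaleCoupling.liftedCouplingCurve_le
    (hγ : IsLiftedMartingaleCoupling γh μh ν) (p : ℝ) : liftedCouplingCurve γh p ≤ ν := by
  rw [← hγ.2.1, liftedCouplingCurve]
  exact Measure.map_mono Measure.restrict_le_self measurable_snd.snd

lemma IsLiftedMartingaleCoupling.convexOrder_liftCurve [IsFiniteMeasure ν]
    (hγ : IsLiftedMartingaleCoupling γh μh ν) (hμ : Integrable (fun x : ℝ => x) μ)
    (hν : Integrable (fun x : ℝ => x) ν) (hlift : μh.map Prod.snd = μ) (p : ℝ) :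
    ConvexOrder (liftCurve μh p) (liftedCouplingCurve γh p) := by
  have := hγ.isFiniteMeasure
  intro φ hφ hφμ hφν
  have hφc : Continuous φ := continuousOn_univ.mp (hφ.continuousOn isOpen_univ)
  rw [hγ.liftCurve_eq p] at hφμ ⊢
  rw [liftedCouplingCurve] at hφν ⊢
  rw [integral_map measurable_snd.fst.aemeasurable hφc.aestronglyMeasurable,
    integral_map measurable_snd.snd.aemeasurable hφc.aestronglyMeasurable]
  have hx : Integrable (fun r => r.2.1) γh := (integrable_map_measure aestronglyMeasurable_id
    measurable_snd.fst.aemeasurable).mp (hγ.map_snd_fst hlift ▸ hμ)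
  have hy : Integrable (fun r => r.2.2) γh := (integrable_map_measure aestronglyMeasurable_id
    measurable_snd.snd.aemeasurable).mp (hγ.2.1 ▸ hν)
  have hmart : IsLiftedMartingale (γh.restrict {r | r.1 ≤ p}) :=
    IsLiftedMartingale.restrict_fst_le hγ.2.2 p
  exact hφ.integral_comp_le_of_condExp_ae_eq sigmaUX_le
    (hmart.condExp_ae_eq hx.restrict hy.restrict) hy.restrict
    ((integrable_map_measure hφc.aestronglyMeasurable measurable_snd.fst.aemeasurable).mp hφμ)
    ((integrable_map_measure hφc.aestronglyMeasurable measurable_snd.snd.aemeasurable).mp hφν)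

lemma integral_liftedCouplingCurve (γh : Measure (ℝ × ℝ × ℝ)) (p : ℝ) {φ : ℝ → ℝ}
    (hφ : Measurable φ) :
    ∫ y, φ y ∂(liftedCouplingCurve γh p) = ∫ r, (if r.1 ≤ p then φ r.2.2 else 0) ∂γh := by
  rw [liftedCouplingCurve, integral_map measurable_snd.snd.aemeasurable hφ.aestronglyMeasurable,
    ← integral_indicator (measurableSet_le measurable_fst measurable_const)]
  simp only [indicator_apply, mem_ofPred_eq]

end LiftedCoupling

theorem liftedShadowCoupling_optimal_general (μ ν : Measure ℝ)
    [IsProbabilityMeasure ν]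
    (hμ : Integrable (fun x : ℝ => x) μ) (hν : Integrable (fun x : ℝ => x) ν)
    (μh : Measure (ℝ × ℝ))
    (hlift₂ : μh.map Prod.snd = μ)
    (πh : Measure (ℝ × ℝ × ℝ))
    (hπshadow : ∀ u ∈ Set.Icc (0:ℝ) 1,
      IsShadow (liftCurve μh u) ν (liftedCouplingCurve πh u)) :
    ∀ p ∈ Set.Icc (0:ℝ) 1, ∀ q : ℝ,
      ∀ γh : Measure (ℝ × ℝ × ℝ), IsLiftedMartingaleCoupling γh μh ν →
        ∫ r, (if r.1 ≤ p then |r.2.2 - q| else 0) ∂πh ≤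
          ∫ r, (if r.1 ≤ p then |r.2.2 - q| else 0) ∂γh := by
  intro p hp q γh hγ
  obtain ⟨-, hπν, hπmin⟩ := hπshadow p hp
  have hγν := hγ.liftedCouplingCurve_le p
  have hdist : Measurable fun y : ℝ => |y - q| := by fun_prop
  have hint : Integrable (fun y : ℝ => |y - q|) ν := (hν.sub (integrable_const q)).abs
  rw [← integral_liftedCouplingCurve πh p hdist, ← integral_liftedCouplingCurve γh p hdist]
  exact hπmin _ (hγ.convexOrder_liftCurve hμ hν hlift₂ p) hγν _
    (by simpa only [Real.dist_eq] using convexOn_univ_dist q)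
    (hint.mono_measure hπν) (hint.mono_measure hγν)

/-- The lifted shadow coupling minimizes `γ̂ ↦ ∫ 1_{u ≤ p} |y − q| dγ̂` over all lifted
martingale couplings, for every `p ∈ [0,1]` and `q ∈ ℝ`. -/
theorem liftedShadowCoupling_optimal (μ ν : Measure ℝ)
    [IsProbabilityMeasure μ] [IsProbabilityMeasure ν]
    (hμ : Integrable (fun x : ℝ => x) μ) (hν : Integrable (fun x : ℝ => x) ν)
    (hμν : ConvexOrder μ ν)
    (μh : Measure (ℝ × ℝ))
    (hlift₁ : μh.map Prod.fst = volume.restrict (Set.Icc (0:ℝ) 1))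
    (hlift₂ : μh.map Prod.snd = μ)
    (πh : Measure (ℝ × ℝ × ℝ))
    (hπ : IsLiftedMartingaleCoupling πh μh ν)
    (hπshadow : ∀ u ∈ Set.Icc (0:ℝ) 1,
      IsShadow (liftCurve μh u) ν (liftedCouplingCurve πh u)) :
    ∀ p ∈ Set.Icc (0:ℝ) 1, ∀ q : ℝ,
      ∀ γh : Measure (ℝ × ℝ × ℝ), IsLiftedMartingaleCoupling γh μh ν →
        ∫ r, (if r.1 ≤ p then |r.2.2 - q| else 0) ∂πh ≤
          ∫ r, (if r.1 ≤ p then |r.2.2 - q| else 0) ∂γh :=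
  liftedShadowCoupling_optimal_general μ ν hμ hν μh hlift₂ πh hπshadow
end

section
/- Let π̂ be a probability measure on [0,1] × ℝ × ℝ concentrated on a monotone set Γ̂, i.e. a Borel set such that whenever s < t and (s,x,y⁻), (s,x,y⁺), (t,x',y') ∈ Γ̂, then y' ∉ (y⁻, y⁺). Suppose π̂ is also a lifted martingale coupling of μ̂ ∈ Π(λ,μ) and ν. Then there exist Borel maps T_up, T_down: [0,1] × ℝ → ℝ with T_down(u,x) ≤ x ≤ T_up(u,x) such that π̂ gives full measure to {(u, x, T_i(u,x)) : i ∈ {up, down}, (u,x) ∈ [0,1] × ℝ}. -/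
open MeasureTheory

/-- A monotone set in `[0,1] × ℝ × ℝ`. -/
def MonotoneSet (Γ : Set (ℝ × ℝ × ℝ)) : Prop :=
  ∀ s t x x' ym yp y' : ℝ, s < t →
    (s, x, ym) ∈ Γ → (s, x, yp) ∈ Γ → (t, x', y') ∈ Γ → y' ∉ Set.Ioo ym yp

/-!
Disintegrate `π̂` along `(u, x)` into kernels `κ_{u,x}`; the martingale property says that
`κ_{u,x}` has barycentre `x` for a.e. `(u, x)`. By monotonicity of `Γ`, all `(u, x)` whose kernel
charges each of `(-∞, r₁)`, `(r₁, r₂)` and `(r₂, ∞)` share the same `u`; as the `u`-marginal is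
Lebesgue measure, for a.e. `(u, x)` this happens for no rationals `r₁, r₂`. Then the support of
`κ_{u,x}` contains no three increasing points, so, having barycentre `x`, `κ_{u,x}` lives on one
point of `[x, ∞)` and one of `(-∞, x]`. These points are the barycentres of `κ_{u,x}` on `(x, ∞)`
and on `(-∞, x)`, which depend measurably on `(u, x)`.
-/

open Set Filter ProbabilityTheory Topology

namespace MeasureTheory

lemma integral_div_measure_eq_of_measure_diff_singleton {α : Type*} [MeasurableSpace α]
    [MeasurableSingletonClass α] {m : Measure α} [IsFiniteMeasure m] {s : Set α} {b : α}
    {f : α → ℝ} (hb : b ∈ s) (hs : m s ≠ 0) (hsb : m (s \ {b}) = 0)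
    (hf : ∀ y ∉ s, f y = 0) :
    (∫ y, f y ∂m) / (m s).toReal = f b := by
  have hf_ae : f =ᵐ[m] ({b} : Set α).indicator fun _ => f b := by
    refine measure_mono_null (fun y hy => ?_) hsb
    by_cases hyb : y = b
    · exact absurd (by simp [hyb]) hy
    · refine ⟨by_contra fun hys => hy ?_, hyb⟩
      simp [hf y hys, hyb]
  have hs_eq : m s = m {b} := by
    rw [← measure_inter_add_sdiff s (measurableSet_singleton b), hsb, add_zero,
      inter_eq_right.2 (singleton_subset_iff.2 hb)]
  rw [integral_congr_ae hf_ae, integral_indicator_const _ (measurableSet_singleton b),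
    hs_eq, smul_eq_mul, Measure.real, mul_div_cancel_left₀]
  exact ENNReal.toReal_ne_zero.2 ⟨hs_eq ▸ hs, measure_ne_top _ _⟩

lemma measure_setOf_nonneg_ne_zero {α : Type*} [MeasurableSpace α] {m : Measure α} (hm : m ≠ 0)
    {f : α → ℝ} (hf : Integrable f m) (hf0 : ∫ a, f a ∂m = 0) :
    m {a | 0 ≤ f a} ≠ 0 := by
  intro h
  have hneg : ∀ᵐ a ∂m, f a < 0 := by simpa [ae_iff] using h
  have hzero : ∀ᵐ a ∂m, -f a = 0 :=
    (integral_eq_zero_iff_of_nonneg_ae (hneg.mono fun a ha => by simp [ha.le]) hf.neg).1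
      (by simp [integral_neg, hf0])
  have hfalse : ∀ᵐ _ ∂m, False := by
    filter_upwards [hneg, hzero] with a h₁ h₂
    linarith
  exact hm (ae_eq_bot.1 (eventually_false_iff_eq_bot.1 hfalse))

section HalfLineMean

variable (m : Measure ℝ) (x : ℝ)

-- Barycentres of `m` on `(x, ∞)` and on `(-∞, x)`; they default to `x` when that half-line is
-- null.
noncomputable def upperMean : ℝ := x + (∫ y, max (y - x) 0 ∂m) / (m (Ioi x)).toReal

noncomputable def lowerMean : ℝ := x - (∫ y, max (x - y) 0 ∂m) / (m (Iio x)).toReal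

lemma self_le_upperMean : x ≤ upperMean m x :=
  le_add_of_nonneg_right <|
    div_nonneg (integral_nonneg fun _ => le_max_right _ _) ENNReal.toReal_nonneg

lemma lowerMean_le_self : lowerMean m x ≤ x :=
  sub_le_self _ (div_nonneg (integral_nonneg fun _ => le_max_right _ _) ENNReal.toReal_nonneg)

lemma upperMean_eq_self {m : Measure ℝ} {x : ℝ} (h : m (Ioi x) = 0) : upperMean m x = x := by
  simp [upperMean, h]

lemma lowerMean_eq_self {m : Measure ℝ} {x : ℝ} (h : m (Iio x) = 0) : lowerMean m x = x := by
  simp [lowerMean, h]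

variable {m x} [IsFiniteMeasure m] {b : ℝ}

lemma upperMean_eq (hxb : x < b) (hm : m (Ioi x) ≠ 0) (hb : m (Ioi x \ {b}) = 0) :
    upperMean m x = b := by
  rw [upperMean, integral_div_measure_eq_of_measure_diff_singleton (mem_Ioi.2 hxb) hm hb
    fun y hy => max_eq_right (sub_nonpos.2 (not_lt.1 hy)), max_eq_left (sub_nonneg.2 hxb.le)]
  ring

lemma lowerMean_eq (hbx : b < x) (hm : m (Iio x) ≠ 0) (hb : m (Iio x \ {b}) = 0) :
    lowerMean m x = b := by
  rw [lowerMean, integral_div_measure_eq_of_measure_diff_singleton (mem_Iio.2 hbx) hm hb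
    fun y hy => max_eq_right (sub_nonpos.2 (not_lt.1 hy)), max_eq_left (sub_nonneg.2 hbx.le)]
  ring

end HalfLineMean

def ChargesThreeIntervals (m : Measure ℝ) (r₁ r₂ : ℝ) : Prop :=
  m (Iio r₁) ≠ 0 ∧ m (Ioo r₁ r₂) ≠ 0 ∧ m (Ioi r₂) ≠ 0

section Support

variable {m : Measure ℝ}

lemma measure_ne_zero_of_mem_support {y : ℝ} (hy : y ∈ m.support) {s : Set ℝ} (hs : s ∈ 𝓝 y) :
    m s ≠ 0 :=
  ((Measure.mem_support_iff_forall y).1 hy s hs).ne'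

lemma exists_rat_chargesThreeIntervals {y₁ y₂ y₃ : ℝ} (h₁ : y₁ ∈ m.support)
    (h₂ : y₂ ∈ m.support) (h₃ : y₃ ∈ m.support) (h₁₂ : y₁ < y₂) (h₂₃ : y₂ < y₃) :
    ∃ r₁ r₂ : ℚ, ChargesThreeIntervals m r₁ r₂ := by
  obtain ⟨r₁, hr₁, hr₁'⟩ := exists_rat_btwn h₁₂
  obtain ⟨r₂, hr₂, hr₂'⟩ := exists_rat_btwn h₂₃
  exact ⟨r₁, r₂, measure_ne_zero_of_mem_support h₁ (Iio_mem_nhds hr₁),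
    measure_ne_zero_of_mem_support h₂ (Ioo_mem_nhds hr₁' hr₂),
    measure_ne_zero_of_mem_support h₃ (Ioi_mem_nhds hr₂')⟩

variable (hthree : ∀ r₁ r₂ : ℚ, ¬ ChargesThreeIntervals m r₁ r₂)
include hthree

lemma measure_Ioi_diff_singleton_eq_zero {c x y : ℝ} (hc : c ∈ m.support) (hcx : c ≤ x)
    (hy : y ∈ m.support) (hxy : x < y) : m (Ioi x \ {y}) = 0 := by
  refine measure_mono_null ?_ m.measure_compl_support
  rintro z ⟨hxz, hzy⟩ hz
  rcases lt_or_gt_of_ne hzy with hzy | hyz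
  · obtain ⟨r₁, r₂, h⟩ := exists_rat_chargesThreeIntervals hc hz hy (hcx.trans_lt hxz) hzy
    exact hthree r₁ r₂ h
  · obtain ⟨r₁, r₂, h⟩ := exists_rat_chargesThreeIntervals hc hy hz (hcx.trans_lt hxy) hyz
    exact hthree r₁ r₂ h

lemma measure_Iio_diff_singleton_eq_zero {d x y : ℝ} (hd : d ∈ m.support) (hxd : x ≤ d)
    (hy : y ∈ m.support) (hyx : y < x) : m (Iio x \ {y}) = 0 := by
  refine measure_mono_null ?_ m.measure_compl_support
  rintro z ⟨hzx, hzy⟩ hz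
  rcases lt_or_gt_of_ne hzy with hzy | hyz
  · obtain ⟨r₁, r₂, h⟩ := exists_rat_chargesThreeIntervals hz hy hd hzy (hyx.trans_le hxd)
    exact hthree r₁ r₂ h
  · obtain ⟨r₁, r₂, h⟩ := exists_rat_chargesThreeIntervals hy hz hd hyz (hzx.trans_le hxd)
    exact hthree r₁ r₂ h

lemma ae_eq_upperMean_or_lowerMean [IsFiniteMeasure m] {x : ℝ}
    (hint : Integrable (fun y => y - x) m) (hmean : ∫ y, (y - x) ∂m = 0) :
    ∀ᵐ y ∂m, y = upperMean m x ∨ y = lowerMean m x := by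
  filter_upwards [m.support_mem_ae] with y hy
  have hm0 : m ≠ 0 := fun h => by simpa [h] using measure_ne_zero_of_mem_support hy univ_mem
  have hle : m (Iic x) ≠ 0 := by
    have h := measure_setOf_nonneg_ne_zero hm0 hint.neg
      (by simp only [Pi.neg_apply, integral_neg, hmean, neg_zero])
    simp only [Pi.neg_apply, neg_nonneg, sub_nonpos] at h
    exact h
  have hge : m (Ici x) ≠ 0 := by
    have h := measure_setOf_nonneg_ne_zero hm0 hint hmean
    simp only [sub_nonneg] at h
    exact h
  obtain ⟨c, hcx, hc⟩ := m.nonempty_inter_support_of_pos (pos_iff_ne_zero.2 hle)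
  obtain ⟨d, hxd, hd⟩ := m.nonempty_inter_support_of_pos (pos_iff_ne_zero.2 hge)
  rcases lt_trichotomy y x with hyx | rfl | hxy
  · exact .inr (lowerMean_eq hyx (measure_ne_zero_of_mem_support hy (Iio_mem_nhds hyx))
      (measure_Iio_diff_singleton_eq_zero hthree hd hxd hy hyx)).symm
  · by_cases hup : m (Ioi y) = 0
    · exact .inl (upperMean_eq_self hup).symm
    by_cases hlow : m (Iio y) = 0
    · exact .inr (lowerMean_eq_self hlow).symm
    obtain ⟨b, hyb, hb⟩ := m.nonempty_inter_support_of_pos (pos_iff_ne_zero.2 hup)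
    obtain ⟨a, hay, ha⟩ := m.nonempty_inter_support_of_pos (pos_iff_ne_zero.2 hlow)
    obtain ⟨r₁, r₂, h⟩ := exists_rat_chargesThreeIntervals ha hy hb hay hyb
    exact absurd h (hthree r₁ r₂)
  · exact .inl (upperMean_eq hxy (measure_ne_zero_of_mem_support hy (Ioi_mem_nhds hxy))
      (measure_Ioi_diff_singleton_eq_zero hthree hc hcx hy hxy)).symm

end Support

section Kernel

variable {α : Type*} [MeasurableSpace α]

lemma measurable_upperMean (κ : Kernel α ℝ) [IsSFiniteKernel κ] {g : α → ℝ} (hg : Measurable g) :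
    Measurable fun a => upperMean (κ a) (g a) := by
  have hI : StronglyMeasurable fun q : α × ℝ => max (q.2 - g q.1) 0 := by
    apply Measurable.stronglyMeasurable; fun_prop
  have hm : Measurable fun a => κ a (Ioi (g a)) :=
    Kernel.measurable_kernel_prodMk_left (t := {q : α × ℝ | g q.1 < q.2})
      (measurableSet_lt (hg.comp measurable_fst) measurable_snd)
  exact hg.add (hI.integral_kernel_prod_right'.measurable.div hm.ennreal_toReal)

lemma measurable_lowerMean (κ : Kernel α ℝ) [IsSFiniteKernel κ] {g : α → ℝ} (hg : Measurable g) :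
    Measurable fun a => lowerMean (κ a) (g a) := by
  have hI : StronglyMeasurable fun q : α × ℝ => max (g q.1 - q.2) 0 := by
    apply Measurable.stronglyMeasurable; fun_prop
  have hm : Measurable fun a => κ a (Iio (g a)) :=
    Kernel.measurable_kernel_prodMk_left (t := {q : α × ℝ | q.2 < g q.1})
      (measurableSet_lt measurable_snd (hg.comp measurable_fst))
  exact hg.sub (hI.integral_kernel_prod_right'.measurable.div hm.ennreal_toReal)

variable {Ω : Type*} [MeasurableSpace Ω] [StandardBorelSpace Ω] [Nonempty Ω]

lemma ae_integral_condKernel_eq_zero (ρ : Measure (α × Ω)) [IsFiniteMeasure ρ] {F : α × Ω → ℝ}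
    (hFm : Measurable F) (hF : Integrable F ρ)
    (h : ∀ f : α → ℝ, Measurable f → (∀ a, |f a| ≤ 1) → ∫ q, F q * f q.1 ∂ρ = 0) :
    ∀ᵐ a ∂ρ.fst, ∫ y, F (a, y) ∂ρ.condKernel a = 0 := by
  set g : α → ℝ := fun a => ∫ y, F (a, y) ∂ρ.condKernel a
  have hg : Measurable g := hFm.stronglyMeasurable.integral_kernel_prod_right'.measurable
  set f : α → ℝ := fun a => if 0 ≤ g a then 1 else -1
  have hf : Measurable f := Measurable.ite (measurableSet_le measurable_const hg)
    measurable_const measurable_const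
  have hf_abs : ∀ a, |f a| ≤ 1 := fun a => by simp only [f]; split_ifs <;> simp
  have hgf : ∀ a, ∫ y, F (a, y) * f a ∂ρ.condKernel a = |g a| := fun a => by
    rw [integral_mul_const]
    simp only [f]
    split_ifs with hga
    · rw [mul_one, abs_of_nonneg hga]
    · rw [mul_neg_one, abs_of_neg (not_le.1 hga)]
  have hFf : Integrable (fun q => F q * f q.1) ρ :=
    hF.mul_bdd (c := 1) (hf.comp measurable_fst).aestronglyMeasurable
      (.of_forall fun q => hf_abs q.1)
  have habs : ∫ a, |g a| ∂ρ.fst = 0 := by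
    simp_rw [← hgf]
    rw [Measure.integral_condKernel hFf]
    exact h f hf hf_abs
  filter_upwards [(integral_eq_zero_iff_of_nonneg (fun a => abs_nonneg (g a))
    hF.integral_condKernel.abs).1 habs] with a ha
  exact abs_eq_zero.1 ha

end Kernel

end MeasureTheory

lemma MonotoneSet.le_of_chargesThreeIntervals {Γ : Set (ℝ × ℝ × ℝ)} (hΓ : MonotoneSet Γ)
    {s t x x' r₁ r₂ : ℝ} {m m' : Measure ℝ} (hm : ∀ᵐ y ∂m, (s, x, y) ∈ Γ)
    (hm' : ∀ᵐ y ∂m', (t, x', y) ∈ Γ) (h : ChargesThreeIntervals m r₁ r₂)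
    (h' : m' (Ioo r₁ r₂) ≠ 0) : t ≤ s := by
  obtain ⟨ym, hym, hymΓ⟩ := Measure.exists_mem_of_measure_ne_zero_of_ae h.1 (ae_restrict_of_ae hm)
  obtain ⟨yp, hyp, hypΓ⟩ :=
    Measure.exists_mem_of_measure_ne_zero_of_ae h.2.2 (ae_restrict_of_ae hm)
  obtain ⟨y', hy', hy'Γ⟩ := Measure.exists_mem_of_measure_ne_zero_of_ae h' (ae_restrict_of_ae hm')
  by_contra! hst
  exact hΓ s t x x' ym yp y' hst hymΓ hypΓ hy'Γ ⟨hym.trans hy'.1, hy'.2.trans hyp⟩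

lemma measure_eq_zero_of_subsingleton_image_fst {α β : Type*} [MeasurableSpace α]
    [MeasurableSpace β] (μ : Measure (α × β)) [NullSingletonClass (μ.map Prod.fst)]
    {s : Set (α × β)} (hs : (Prod.fst '' s).Subsingleton) : μ s = 0 :=
  measure_mono_null (subset_preimage_image Prod.fst s) <| nonpos_iff_eq_zero.1 <|
    (Measure.le_map_apply measurable_fst.aemeasurable _).trans (hs.measure_zero _).le

lemma IsLiftedMartingaleCoupling.isProbabilityMeasure {πh : Measure (ℝ × ℝ × ℝ)}
    {μh : Measure (ℝ × ℝ)} {ν : Measure ℝ} (hπ : IsLiftedMartingaleCoupling πh μh ν)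
    (hlift : μh.map Prod.fst = volume.restrict (Icc (0 : ℝ) 1)) : IsProbabilityMeasure πh := by
  have : IsProbabilityMeasure (μh.map Prod.fst) := hlift ▸ ⟨by simp⟩
  have := Measure.isProbabilityMeasure_of_map (μ := μh) Prod.fst
  have : IsProbabilityMeasure (πh.map fun p => (p.1, p.2.1)) := hπ.1 ▸ this
  exact Measure.isProbabilityMeasure_of_map fun p => (p.1, p.2.1)

lemma IsLiftedMartingaleCoupling.integrable_sub {πh : Measure (ℝ × ℝ × ℝ)}
    {μh : Measure (ℝ × ℝ)} {μ ν : Measure ℝ} (hπ : IsLiftedMartingaleCoupling πh μh ν)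
    (hlift : μh.map Prod.snd = μ) (hμ : Integrable (fun x : ℝ => x) μ)
    (hν : Integrable (fun x : ℝ => x) ν) : Integrable (fun p => p.2.2 - p.2.1) πh := by
  rw [← hπ.2.1] at hν
  rw [← hlift, ← hπ.1, Measure.map_map measurable_snd (by fun_prop)] at hμ
  exact (integrable_map_measure aestronglyMeasurable_id (by fun_prop)).1 hν |>.sub <|
    (integrable_map_measure aestronglyMeasurable_id (by fun_prop)).1 hμ

theorem ae_ae_eq_upperMean_or_lowerMean_of_monotoneSet {Γ : Set (ℝ × ℝ × ℝ)}
    (hΓ : MonotoneSet Γ) (ρ : Measure ((ℝ × ℝ) × ℝ)) [IsFiniteMeasure ρ]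
    [NullSingletonClass (ρ.fst.map Prod.fst)] (hρΓ : ∀ᵐ q ∂ρ, (q.1.1, q.1.2, q.2) ∈ Γ)
    (hint : Integrable (fun q => q.2 - q.1.2) ρ)
    (hmart : ∀ f : ℝ × ℝ → ℝ, Measurable f → (∀ a, |f a| ≤ 1) →
      ∫ q, (q.2 - q.1.2) * f q.1 ∂ρ = 0) :
    ∀ᵐ a ∂ρ.fst, ∀ᵐ y ∂ρ.condKernel a,
      y = upperMean (ρ.condKernel a) a.2 ∨ y = lowerMean (ρ.condKernel a) a.2 := by
  set κ := ρ.condKernel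
  have hΓκ : ∀ᵐ a ∂ρ.fst, ∀ᵐ y ∂κ a, (a.1, a.2, y) ∈ Γ := by
    rw [← ρ.disintegrate κ] at hρΓ
    exact Measure.ae_ae_of_ae_compProd hρΓ
  set D : ℚ × ℚ → Set (ℝ × ℝ) := fun r =>
    {a | (∀ᵐ y ∂κ a, (a.1, a.2, y) ∈ Γ) ∧ ChargesThreeIntervals (κ a) r.1 r.2}
  have hD : ∀ r, ρ.fst (D r) = 0 := fun r => measure_eq_zero_of_subsingleton_image_fst _ <| by
    rintro _ ⟨a, ha, rfl⟩ _ ⟨b, hb, rfl⟩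
    exact le_antisymm (hΓ.le_of_chargesThreeIntervals hb.1 ha.1 hb.2 ha.2.2.1)
      (hΓ.le_of_chargesThreeIntervals ha.1 hb.1 ha.2 hb.2.2.1)
  have hD_ae : ∀ᵐ a ∂ρ.fst, ∀ r, a ∉ D r :=
    ae_all_iff.2 fun r => measure_eq_zero_iff_ae_notMem.1 (hD r)
  filter_upwards [hΓκ, hD_ae, hint.condKernel_ae,
    ae_integral_condKernel_eq_zero ρ (by fun_prop) hint hmart] with a haΓ haD hai ham
  exact ae_eq_upperMean_or_lowerMean (fun r₁ r₂ h => haD (r₁, r₂) ⟨haΓ, h⟩) hai ham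

theorem monotone_coupling_two_graphs_general (μ ν : Measure ℝ)
    (hμ : Integrable (fun x : ℝ => x) μ) (hν : Integrable (fun x : ℝ => x) ν)
    (μh : Measure (ℝ × ℝ))
    (hlift₁ : μh.map Prod.fst = volume.restrict (Set.Icc (0:ℝ) 1))
    (hlift₂ : μh.map Prod.snd = μ)
    (πh : Measure (ℝ × ℝ × ℝ))
    (hπ : IsLiftedMartingaleCoupling πh μh ν)
    (Γ : Set (ℝ × ℝ × ℝ)) (hΓmeas : MeasurableSet Γ) (hΓ : MonotoneSet Γ)
    (hfull : πh Γ = 1) :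
    ∃ Tup Tdown : ℝ × ℝ → ℝ, Measurable Tup ∧ Measurable Tdown ∧
      (∀ u x : ℝ, Tdown (u, x) ≤ x ∧ x ≤ Tup (u, x)) ∧
      πh {p : ℝ × ℝ × ℝ | p.2.2 = Tup (p.1, p.2.1) ∨ p.2.2 = Tdown (p.1, p.2.1)} = 1 := by
  have := hπ.isProbabilityMeasure hlift₁
  set e : ℝ × ℝ × ℝ ≃ᵐ (ℝ × ℝ) × ℝ := MeasurableEquiv.prodAssoc.symm
  set ρ := πh.map e
  have hρ : ρ.fst = μh := by
    rw [Measure.fst, Measure.map_map measurable_fst e.measurable]; exact hπ.1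
  have : NullSingletonClass (ρ.fst.map Prod.fst) := by rw [hρ, hlift₁]; infer_instance
  have hint : Integrable (fun q => q.2 - q.1.2) ρ :=
    (integrable_map_equiv e _).2 (hπ.integrable_sub hlift₂ hμ hν)
  have hΓρ : ∀ᵐ q ∂ρ, (q.1.1, q.1.2, q.2) ∈ Γ :=
    e.measurableEmbedding.ae_map_iff.2 <|
      (ae_mem_iff_measure_eq hΓmeas.nullMeasurableSet).2 (by rw [hfull, measure_univ])
  have key := ae_ae_eq_upperMean_or_lowerMean_of_monotoneSet hΓ ρ hΓρ hint
    fun f hf hf_abs => by rw [integral_map_equiv]; exact hπ.2.2 f hf hf_abs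
  have hup := measurable_upperMean ρ.condKernel measurable_snd
  have hlow := measurable_lowerMean ρ.condKernel measurable_snd
  refine ⟨_, _, hup, hlow, fun u x => ⟨lowerMean_le_self _ _, self_le_upperMean _ _⟩, ?_⟩
  have hS := (measurableSet_eq_fun measurable_snd (hup.comp measurable_fst)).union
    (measurableSet_eq_fun measurable_snd (hlow.comp measurable_fst))
  have hρS := Measure.ae_compProd_of_ae_ae hS key
  rw [ρ.disintegrate] at hρS
  have : IsProbabilityMeasure ρ := Measure.isProbabilityMeasure_map e.measurable.aemeasurable
  exact (e.map_apply _).symm.trans ((mem_ae_iff_prob_eq_one hS).1 hρS)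

/-- A lifted martingale coupling concentrated on a monotone set is concentrated on the
graphs of two maps `T_down ≤ id ≤ T_up`. -/
theorem monotone_coupling_two_graphs (μ ν : Measure ℝ)
    [IsProbabilityMeasure μ] [IsProbabilityMeasure ν]
    (hμ : Integrable (fun x : ℝ => x) μ) (hν : Integrable (fun x : ℝ => x) ν)
    (μh : Measure (ℝ × ℝ))
    (hlift₁ : μh.map Prod.fst = volume.restrict (Set.Icc (0:ℝ) 1))
    (hlift₂ : μh.map Prod.snd = μ)
    (πh : Measure (ℝ × ℝ × ℝ))
    (hπ : IsLiftedMartingaleCoupling πh μh ν)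
    (Γ : Set (ℝ × ℝ × ℝ)) (hΓmeas : MeasurableSet Γ) (hΓ : MonotoneSet Γ)
    (hfull : πh Γ = 1) :
    ∃ Tup Tdown : ℝ × ℝ → ℝ, Measurable Tup ∧ Measurable Tdown ∧
      (∀ u x : ℝ, Tdown (u, x) ≤ x ∧ x ≤ Tup (u, x)) ∧
      πh {p : ℝ × ℝ × ℝ | p.2.2 = Tup (p.1, p.2.1) ∨ p.2.2 = Tdown (p.1, p.2.1)} = 1 :=
  monotone_coupling_two_graphs_general μ ν hμ hν μh hlift₁ hlift₂ πh hπ Γ hΓmeas hΓ hfull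
end

section
/- Let μ ≤_s ν (stochastic order) be probability measures on ℝ with finite first moments. Define the stochastic shadow of a submeasure μ' ≤ μ (setwise) in ν as the ≤_s-smallest measure η with μ' ≤_s η and η ≤ ν. Then for the curve μ_{[0,u]} = (G_μ)_#(λ restricted to [0,u]), the stochastic shadow of μ_{[0,u]} in ν equals (G_ν)_#(λ restricted to [0,u]); i.e. it is the corresponding lower quantile portion of ν, independently of the internal structure of μ_{[0,u]} beyond its mass. -/
open MeasureTheory

/-- Stochastic order on finite measures: `∫ f dμ ≤ ∫ f dν` for every increasing `f` for
which both integrals exist. -/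
def StochOrder (μ ν : Measure ℝ) : Prop :=
  ∀ f : ℝ → ℝ, Monotone f → Integrable f μ → Integrable f ν →
    ∫ x, f x ∂μ ≤ ∫ x, f x ∂ν

/-- `η` is the stochastic shadow of `μ'` in `ν`: the `≤_s`-smallest measure `η` with
`μ' ≤_s η` and `η ≤ ν`. -/
def IsStochShadow (μ' ν η : Measure ℝ) : Prop :=
  StochOrder μ' η ∧ η ≤ ν ∧
    ∀ η' : Measure ℝ, StochOrder μ' η' → η' ≤ ν → StochOrder η η'

/-!
`μ ≤_s ν` compares distribution functions, and left continuity of `G_μ` turns this into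
`G_μ ≤ G_ν` on `(0,1)`; pushing `λ|_{(0,u)}` forward along both gives
`μ_{[0,u]} ≤_s ν_{[0,u]} ≤ ν`. For minimality let `η ≤ ν` have mass `u`. If an upper set `s`
is charged by `ν_{[0,u]}`, then `G_ν` maps `[u,1)` into `s`, so `ν` and `ν_{[0,u]}` agree on
`sᶜ`, and `η sᶜ ≤ ν sᶜ` gives `ν_{[0,u]} s ≤ η s`. Domination on upper sets between measures of
equal mass is `≤_s`, by the layer-cake formula for the positive and negative parts of an
increasing function.
-/

open Set

theorem measure_compl_le_of_measure_le {X : Type*} [MeasurableSpace X] {α β : Measure X}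
    [IsFiniteMeasure β] (huniv : α univ = β univ) {s : Set X} (hs : MeasurableSet s)
    (h : α s ≤ β s) : β sᶜ ≤ α sᶜ := by
  refine (ENNReal.add_le_add_iff_left (measure_ne_top β s)).mp ?_
  calc β s + β sᶜ = α s + α sᶜ := by
        rw [measure_add_measure_compl hs, measure_add_measure_compl hs, huniv]
    _ ≤ β s + α sᶜ := by gcongr

theorem integral_le_integral_of_measure_lt_le {X : Type*} [MeasurableSpace X]
    {α β : Measure X} {g : X → ℝ} (hg : Measurable g) (hg0 : 0 ≤ g) (hβ : Integrable g β)
    (h : ∀ t, α {x | t < g x} ≤ β {x | t < g x}) : ∫ x, g x ∂α ≤ ∫ x, g x ∂β := by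
  have hg0' {γ : Measure X} : 0 ≤ᵐ[γ] g := Filter.Eventually.of_forall hg0
  rw [integral_eq_lintegral_of_nonneg_ae hg0' hg.aestronglyMeasurable,
    integral_eq_lintegral_of_nonneg_ae hg0' hg.aestronglyMeasurable]
  refine ENNReal.toReal_mono hβ.lintegral_lt_top.ne ?_
  rw [lintegral_eq_lintegral_meas_lt α hg0' hg.aemeasurable,
    lintegral_eq_lintegral_meas_lt β hg0' hg.aemeasurable]
  exact lintegral_mono h

theorem stochOrder_of_measure_le_of_isUpperSet {α β : Measure ℝ} [IsFiniteMeasure α]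
    [IsFiniteMeasure β] (huniv : α univ = β univ)
    (hup : ∀ s, IsUpperSet s → MeasurableSet s → α s ≤ β s) : StochOrder α β := by
  intro f hf hfα hfβ
  have hmeas {g : ℝ → ℝ} (hg : Measurable g) : Measurable fun x ↦ ((g x).toNNReal : ℝ) :=
    hg.real_toNNReal.coe_nnreal_real
  rw [integral_eq_integral_pos_part_sub_integral_neg_part hfα,
    integral_eq_integral_pos_part_sub_integral_neg_part hfβ]
  refine sub_le_sub ?_ ?_
  · refine integral_le_integral_of_measure_lt_le (hmeas hf.measurable)
      (fun _ ↦ NNReal.coe_nonneg _) hfβ.real_toNNReal fun t ↦ ?_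
    have hsm : MeasurableSet {x | t < ((f x).toNNReal : ℝ)} :=
      measurableSet_lt measurable_const (hmeas hf.measurable)
    refine hup _ (fun x y hxy hx ↦ ?_) hsm
    exact hx.trans_le (NNReal.coe_le_coe.mpr (Real.toNNReal_le_toNNReal (hf hxy)))
  · refine integral_le_integral_of_measure_lt_le (hmeas hf.measurable.neg)
      (fun _ ↦ NNReal.coe_nonneg _) hfα.neg.real_toNNReal fun t ↦ ?_
    have hsm : MeasurableSet {x | t < ((-f x).toNNReal : ℝ)} :=
      measurableSet_lt measurable_const (hmeas hf.measurable.neg)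
    have hs : IsLowerSet {x | t < ((-f x).toNNReal : ℝ)} := fun x y hxy hx ↦
      hx.trans_le (NNReal.coe_le_coe.mpr (Real.toNNReal_le_toNNReal (neg_le_neg (hf hxy))))
    simpa using measure_compl_le_of_measure_le huniv hsm.compl (hup _ hs.compl hsm.compl)

namespace StochOrder

variable {α β : Measure ℝ} [IsFiniteMeasure α] [IsFiniteMeasure β]

theorem measure_univ_eq (h : StochOrder α β) : α univ = β univ := by
  have h1 := h (fun _ ↦ 1) monotone_const (integrable_const _) (integrable_const _)
  have h2 := h (fun _ ↦ -1) monotone_const (integrable_const _) (integrable_const _)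
  simp only [integral_const, smul_eq_mul, mul_one, mul_neg, neg_le_neg_iff] at h1 h2
  exact (ENNReal.toReal_eq_toReal_iff' (measure_ne_top α _) (measure_ne_top β _)).mp
    (h1.antisymm h2)

theorem measure_le_of_isUpperSet (h : StochOrder α β) {s : Set ℝ} (hs : IsUpperSet s)
    (hsm : MeasurableSet s) : α s ≤ β s := by
  have hmono : Monotone (s.indicator 1 : ℝ → ℝ) := by
    intro x y hxy
    by_cases hx : x ∈ s
    · simp [hx, hs hxy hx]
    · simp [hx, indicator_nonneg]
  have hint {γ : Measure ℝ} [IsFiniteMeasure γ] : Integrable (s.indicator 1) γ :=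
    (integrable_const (1 : ℝ)).indicator hsm
  have := h _ hmono hint hint
  rw [integral_indicator_one hsm, integral_indicator_one hsm] at this
  exact (ENNReal.toReal_le_toReal (measure_ne_top α _) (measure_ne_top β _)).mp this

theorem measure_Iio_le (h : StochOrder α β) (x : ℝ) : β (Iio x) ≤ α (Iio x) := by
  rw [← compl_Ici]
  exact measure_compl_le_of_measure_le h.measure_univ_eq measurableSet_Ici
    (h.measure_le_of_isUpperSet (isUpperSet_Ici x) measurableSet_Ici)

end StochOrder

theorem stochOrder_map_of_ae_le {X : Type*} [MeasurableSpace X] {ρ : Measure X}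
    {G H : X → ℝ} (hG : Measurable G) (hH : Measurable H) (hGH : G ≤ᵐ[ρ] H) :
    StochOrder (ρ.map G) (ρ.map H) := by
  intro f hf hfG hfH
  rw [integral_map hG.aemeasurable hf.measurable.aestronglyMeasurable,
    integral_map hH.aemeasurable hf.measurable.aestronglyMeasurable]
  exact integral_mono_ae (hfG.comp_measurable hG) (hfH.comp_measurable hH)
    (hGH.mono fun _ hx ↦ hf hx)

section Quantile

variable {G : ℝ → ℝ}

theorem map_volume_restrict_apply (hG : Measurable G) (s : Set ℝ) {A : Set ℝ}
    (hA : MeasurableSet A) : (volume.restrict s).map G A = volume (G ⁻¹' A ∩ s) := by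
  rw [Measure.map_apply hG hA, Measure.restrict_apply (hG hA)]

theorem map_volume_restrict_Ioo_univ (hG : Measurable G) (u : ℝ) :
    (volume.restrict (Ioo 0 u)).map G univ = ENNReal.ofReal u := by
  rw [map_volume_restrict_apply hG _ MeasurableSet.univ, preimage_univ, univ_inter,
    Real.volume_Ioo, sub_zero]

theorem map_volume_restrict_Ioo_Iio_le (hG : Monotone G) (t : ℝ) :
    (volume.restrict (Ioo 0 1)).map G (Iio (G t)) ≤ ENNReal.ofReal t := by
  rw [map_volume_restrict_apply hG.measurable _ measurableSet_Iio]
  calc volume (G ⁻¹' Iio (G t) ∩ Ioo 0 1) ≤ volume (Ioo 0 t) :=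
        measure_mono fun s ⟨hs, hs01⟩ ↦ ⟨hs01.1, hG.reflect_lt hs⟩
    _ = ENNReal.ofReal t := by rw [Real.volume_Ioo, sub_zero]

theorem ofReal_le_map_volume_restrict_Ioo_Iio (hG : Monotone G) {t x : ℝ} (hGt : G t < x)
    (ht : t ≤ 1) : ENNReal.ofReal t ≤ (volume.restrict (Ioo 0 1)).map G (Iio x) := by
  rw [map_volume_restrict_apply hG.measurable _ measurableSet_Iio]
  calc ENNReal.ofReal t = volume (Ioo 0 t) := by rw [Real.volume_Ioo, sub_zero]
    _ ≤ volume (G ⁻¹' Iio x ∩ Ioo 0 1) :=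
        measure_mono fun s hs ↦ ⟨(hG hs.2.le).trans_lt hGt, hs.1, hs.2.trans_le ht⟩

theorem le_of_stochOrder_map_volume_restrict_Ioo {Gμ Gν : ℝ → ℝ} (hGμ : Monotone Gμ)
    (hGν : Monotone Gν) (hGμl : ∀ t, ContinuousWithinAt Gμ (Iio t) t)
    (h : StochOrder ((volume.restrict (Ioo 0 1)).map Gμ) ((volume.restrict (Ioo 0 1)).map Gν))
    {t : ℝ} (ht : t ∈ Ioo 0 1) : Gμ t ≤ Gν t := by
  by_contra! hlt
  obtain ⟨t', hlt', ht'⟩ : ∃ t', Gν t < Gμ t' ∧ t' ∈ Ioo 0 t :=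
    (((hGμl t).eventually (eventually_gt_nhds hlt)).and (Ioo_mem_nhdsLT ht.1)).exists
  have : ENNReal.ofReal t ≤ ENNReal.ofReal t' :=
    calc ENNReal.ofReal t ≤ (volume.restrict (Ioo 0 1)).map Gν (Iio (Gμ t')) :=
          ofReal_le_map_volume_restrict_Ioo_Iio hGν hlt' ht.2.le
      _ ≤ (volume.restrict (Ioo 0 1)).map Gμ (Iio (Gμ t')) := h.measure_Iio_le _
      _ ≤ ENNReal.ofReal t' := map_volume_restrict_Ioo_Iio_le hGμ t'
  exact ((ENNReal.ofReal_le_ofReal_iff ht'.1.le).mp this).not_gt ht'.2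

theorem stochOrder_map_volume_restrict_Ioo_of_le (hG : Monotone G) {u : ℝ}
    {η : Measure ℝ} (hη : η ≤ (volume.restrict (Ioo 0 1)).map G)
    (huniv : η univ = (volume.restrict (Ioo 0 u)).map G univ) :
    StochOrder ((volume.restrict (Ioo 0 u)).map G) η := by
  have := isFiniteMeasure_of_le _ hη
  refine stochOrder_of_measure_le_of_isUpperSet huniv.symm fun s hs hsm ↦ ?_
  rcases (G ⁻¹' s ∩ Ioo 0 u).eq_empty_or_nonempty with hempty | ⟨t₀, hGt₀, ht₀⟩
  · rw [map_volume_restrict_apply hG.measurable _ hsm, hempty, measure_empty]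
    exact zero_le
  have hcompl : η sᶜ ≤ (volume.restrict (Ioo 0 u)).map G sᶜ :=
    calc η sᶜ ≤ (volume.restrict (Ioo 0 1)).map G sᶜ := hη _
      _ ≤ (volume.restrict (Ioo 0 u)).map G sᶜ := by
        rw [map_volume_restrict_apply hG.measurable _ hsm.compl,
          map_volume_restrict_apply hG.measurable _ hsm.compl]
        refine measure_mono fun x ⟨hx, hx01⟩ ↦ ⟨hx, hx01.1, ?_⟩
        exact (lt_of_not_ge fun hle ↦ hx (hs (hG hle) hGt₀)).trans ht₀.2
  simpa using measure_compl_le_of_measure_le huniv hsm.compl hcompl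

end Quantile

theorem stochastic_shadow_is_quantile_general (μ ν : Measure ℝ)
    (hμν : StochOrder μ ν)
    (Gμ Gν : ℝ → ℝ) (hGμ : Monotone Gμ) (hGν : Monotone Gν)
    (hGμl : ∀ t : ℝ, ContinuousWithinAt Gμ (Set.Iio t) t)
    (hGμν : (volume.restrict (Set.Ioo (0:ℝ) 1)).map Gμ = μ)
    (hGνν : (volume.restrict (Set.Ioo (0:ℝ) 1)).map Gν = ν) :
    ∀ u ∈ Set.Icc (0:ℝ) 1,
      IsStochShadow ((volume.restrict (Set.Ioo 0 u)).map Gμ) ν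
        ((volume.restrict (Set.Ioo 0 u)).map Gν) := by
  subst hGμν hGνν
  rintro u ⟨-, hu1⟩
  have hle : Gμ ≤ᵐ[volume.restrict (Ioo 0 u)] Gν :=
    (ae_restrict_iff' measurableSet_Ioo).mpr <| Filter.Eventually.of_forall fun t ht ↦
      le_of_stochOrder_map_volume_restrict_Ioo hGμ hGν hGμl hμν ⟨ht.1, ht.2.trans_le hu1⟩
  refine ⟨stochOrder_map_of_ae_le hGμ.measurable hGν.measurable hle,
    Measure.map_mono (Measure.restrict_mono (Ioo_subset_Ioo_right hu1) le_rfl) hGν.measurable,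
    fun η hμη hην ↦ stochOrder_map_volume_restrict_Ioo_of_le hGν hην ?_⟩
  have := isFiniteMeasure_of_le _ hην
  rw [← hμη.measure_univ_eq, map_volume_restrict_Ioo_univ hGμ.measurable,
    map_volume_restrict_Ioo_univ hGν.measurable]

/-- For `μ ≤_s ν` with quantile functions `G_μ, G_ν`, the stochastic shadow of
`μ_{[0,u]} = (G_μ)_# λ|_{[0,u]}` in `ν` is `(G_ν)_# λ|_{[0,u]}`, the lower quantile
portion of `ν`. -/
theorem stochastic_shadow_is_quantile (μ ν : Measure ℝ)
    [IsProbabilityMeasure μ] [IsProbabilityMeasure ν]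
    (hμ : Integrable (fun x : ℝ => x) μ) (hν : Integrable (fun x : ℝ => x) ν)
    (hμν : StochOrder μ ν)
    (Gμ Gν : ℝ → ℝ) (hGμ : Monotone Gμ) (hGν : Monotone Gν)
    (hGμl : ∀ t : ℝ, ContinuousWithinAt Gμ (Set.Iio t) t)
    (hGνl : ∀ t : ℝ, ContinuousWithinAt Gν (Set.Iio t) t)
    (hGμν : (volume.restrict (Set.Ioo (0:ℝ) 1)).map Gμ = μ)
    (hGνν : (volume.restrict (Set.Ioo (0:ℝ) 1)).map Gν = ν) :
    ∀ u ∈ Set.Icc (0:ℝ) 1,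
      IsStochShadow ((volume.restrict (Set.Ioo 0 u)).map Gμ) ν
        ((volume.restrict (Set.Ioo 0 u)).map Gν) :=
  stochastic_shadow_is_quantile_general μ ν hμν Gμ Gν hGμ hGν hGμl hGμν hGνν
end
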